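/- arXiv:0812.1011 — 4 statements merged into one kernel-verified Lean document; each statement's English description precedes it below -/
import Mathlib

section
/- Fix c₀ > 0 and ε ∈ {+1,−1}, and let (T, e₁, e₂) : ℝ → (ℝ³)³ be the unique solution of the linear ODE system T′(s) = c₀ e₁(s), e₁′(s) = −ε c₀ T(s) + (s/2) e₂(s), e₂′(s) = −(s/2) e₁(s) with initial conditions T(0) = (0,0,1), e₁(0) = (1,0,0), e₂(0) = (0,1,0). Define G(s) := 2c₀·(0,1,0) + ∫₀ˢ T(σ) dσ and X_{c₀}(s,t) := √t · G(s/√t) for t > 0. Then X_{c₀} is a C^∞ function on ℝ × (0,∞) and satisfies ∂ₜX_{c₀}(s,t) = ∂ₛX_{c₀}(s,t) ∧_ε ∂ₛ²X_{c₀}(s,t) for all s ∈ ℝ and t > 0. -/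
open MeasureTheory Set Filter Topology

noncomputable section

/-- Generalized cross product `a ∧_ε b` on ℝ³ (ε = 1: Euclidean, ε = -1: hyperbolic). -/
def wedge (ε : ℝ) (a b : Fin 3 → ℝ) : Fin 3 → ℝ :=
  ![a 1 * b 2 - a 2 * b 1, a 2 * b 0 - a 0 * b 2, ε * (a 0 * b 1 - a 1 * b 0)]

/-- `G(s) = 2c₀·(0,1,0) + ∫₀ˢ T(σ) dσ`. -/
def Gfun (c₀ : ℝ) (T : ℝ → Fin 3 → ℝ) (s : ℝ) : Fin 3 → ℝ :=
  (2 * c₀) • ![0, 1, 0] + ∫ σ in (0:ℝ)..s, T σ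

/-- The self-similar profile `X_{c₀}(s,t) = √t · G(s/√t)`. -/
def Xfun (c₀ : ℝ) (T : ℝ → Fin 3 → ℝ) (s t : ℝ) : Fin 3 → ℝ :=
  Real.sqrt t • Gfun c₀ T (s / Real.sqrt t)

lemma HasDerivAt.wedge {ε : ℝ} {f g : ℝ → Fin 3 → ℝ} {f' g' : Fin 3 → ℝ} {x : ℝ}
    (hf : HasDerivAt f f' x) (hg : HasDerivAt g g' x) :
    HasDerivAt (fun s => wedge ε (f s) (g s)) (wedge ε f' (g x) + wedge ε (f x) g') x := by
  rw [hasDerivAt_pi] at hf hg ⊢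
  intro i
  fin_cases i
  · have h := ((hf 1).mul (hg 2)).sub ((hf 2).mul (hg 1))
    simp only [wedge, Pi.add_apply]
    convert h using 1 <;> (try rfl) <;> simp [_root_.wedge] <;> ring
  · have h := ((hf 2).mul (hg 0)).sub ((hf 0).mul (hg 2))
    simp only [wedge, Pi.add_apply]
    convert h using 1 <;> (try rfl) <;> simp [_root_.wedge] <;> ring
  · have h := (((hf 0).mul (hg 1)).sub ((hf 1).mul (hg 0))).const_mul ε
    simp only [wedge, Pi.add_apply]
    convert h using 1 <;> (try rfl) <;> simp [_root_.wedge] <;> ring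

section uniqueness
variable {F : Type*} [NormedAddCommGroup F] [NormedSpace ℝ F]

/-- Uniqueness for the linear ODE `y' = A y + s • B y` on all of `ℝ`. -/
lemma linODE_unique (A B : F →L[ℝ] F) (f g : ℝ → F)
    (hf : ∀ s, HasDerivAt f (A (f s) + s • B (f s)) s)
    (hg : ∀ s, HasDerivAt g (A (g s) + s • B (g s)) s)
    (h0 : f 0 = g 0) : f = g := by
  funext s₁
  have habs := abs_nonneg s₁
  set R : ℝ := |s₁| + 1 with hR
  have hRpos : (0:ℝ) < R := by linarith
  have hcabs : ∀ t : ℝ, |max (-R) (min t R)| ≤ R := by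
    intro t
    rw [abs_le]
    exact ⟨le_max_left _ _, max_le (by linarith) (min_le_right _ _)⟩
  have hK : ∀ t : ℝ, LipschitzOnWith (‖A‖ + R * ‖B‖).toNNReal
      (fun x => A x + max (-R) (min t R) • B x) univ := by
    intro t
    rw [lipschitzOnWith_univ]
    apply LipschitzWith.of_dist_le_mul
    intro x y
    have h1 : (A x + max (-R) (min t R) • B x) - (A y + max (-R) (min t R) • B y)
        = A (x - y) + max (-R) (min t R) • B (x - y) := by
      rw [map_sub, map_sub, smul_sub]; abel
    rw [dist_eq_norm, dist_eq_norm, h1]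
    have hBR : ‖max (-R) (min t R) • B (x - y)‖ ≤ R * (‖B‖ * ‖x - y‖) := by
      rw [norm_smul]
      exact mul_le_mul (hcabs t) (B.le_opNorm _) (norm_nonneg _) (le_of_lt hRpos)
    calc ‖A (x - y) + max (-R) (min t R) • B (x - y)‖
        ≤ ‖A (x - y)‖ + ‖max (-R) (min t R) • B (x - y)‖ := norm_add_le _ _
      _ ≤ ‖A‖ * ‖x - y‖ + R * (‖B‖ * ‖x - y‖) := add_le_add (A.le_opNorm _) hBR
      _ = (‖A‖ + R * ‖B‖) * ‖x - y‖ := by ring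
      _ = ((‖A‖ + R * ‖B‖).toNNReal : ℝ) * ‖x - y‖ := by
          rw [Real.coe_toNNReal]
          positivity
  have hmem : ∀ t ∈ Ioo (-R) R, max (-R) (min t R) = t := by
    intro t ht
    rw [min_eq_left (le_of_lt ht.2), max_eq_right (le_of_lt ht.1)]
  have h0mem : (0:ℝ) ∈ Ioo (-R) R := ⟨by linarith, by linarith⟩
  have hs₁mem : s₁ ∈ Ioo (-R) R := by
    have h1 : |s₁| < R := by rw [hR]; linarith
    exact ⟨(abs_lt.mp h1).1, (abs_lt.mp h1).2⟩
  exact ODE_solution_unique_of_mem_Ioo (fun t _ => hK t) h0mem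
    (fun t ht => ⟨by rw [hmem t ht]; exact hf t, trivial⟩)
    (fun t ht => ⟨by rw [hmem t ht]; exact hg t, trivial⟩)
    h0 hs₁mem

end uniqueness


section analyticSol
variable {F : Type*} [NormedAddCommGroup F] [NormedSpace ℝ F] [CompleteSpace F]

/-- Taylor coefficients of the solution of `y' = A y + s • B y`, `y 0 = x₀`. -/
noncomputable def aCoeff (A B : F →L[ℝ] F) (x₀ : F) : ℕ → F
  | 0 => x₀
  | 1 => A x₀
  | (n+2) => (((n:ℝ)+2)⁻¹) • (A (aCoeff A B x₀ (n+1)) + B (aCoeff A B x₀ n))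

variable (A B : F →L[ℝ] F) (x₀ : F)

lemma aCoeff_zero : aCoeff A B x₀ 0 = x₀ := rfl
lemma aCoeff_one : aCoeff A B x₀ 1 = A x₀ := rfl

lemma aCoeff_rec (n : ℕ) :
    ((n:ℝ)+2) • aCoeff A B x₀ (n+2) = A (aCoeff A B x₀ (n+1)) + B (aCoeff A B x₀ n) := by
  rw [show aCoeff A B x₀ (n+2) = (((n:ℝ)+2)⁻¹) • (A (aCoeff A B x₀ (n+1)) + B (aCoeff A B x₀ n))
    from rfl, smul_smul, mul_inv_cancel₀ (by positivity), one_smul]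

lemma aCoeff_bound (n : ℕ) :
    ‖aCoeff A B x₀ n‖ * (Nat.factorial (n/2) : ℝ) ≤ ‖x₀‖ * (2 * (max ‖A‖ ‖B‖ + 1))^n := by
  set M : ℝ := max ‖A‖ ‖B‖ + 1 with hM
  have hA : ‖A‖ ≤ M := by
    have := le_max_left ‖A‖ ‖B‖; linarith
  have hB : ‖B‖ ≤ M := by
    have := le_max_right ‖A‖ ‖B‖; linarith
  have hM1 : (1:ℝ) ≤ M := by
    have := norm_nonneg A; have := le_max_left ‖A‖ ‖B‖; linarith
  have hMpos : (0:ℝ) < M := by linarith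
  induction n using Nat.strong_induction_on with
  | _ n ih =>
    match n with
    | 0 => simp [aCoeff]
    | 1 =>
      have h1 : ‖A x₀‖ ≤ ‖A‖ * ‖x₀‖ := A.le_opNorm x₀
      have h0 : (0:ℝ) ≤ ‖x₀‖ := norm_nonneg _
      have : ‖A‖ * ‖x₀‖ ≤ (2*M) * ‖x₀‖ := by nlinarith
      simp only [aCoeff, Nat.factorial, pow_one]
      norm_num
      nlinarith
    | (n+2) =>
      have ih1 := ih (n+1) (by omega)
      have ih0 := ih n (by omega)
      have hfac : ((n+2)/2 : ℕ) = n/2 + 1 := Nat.add_div_right n (by norm_num)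
      have hfacmono : (Nat.factorial (n/2) : ℝ) ≤ (Nat.factorial ((n+1)/2) : ℝ) := by
        exact_mod_cast Nat.factorial_le (Nat.div_le_div_right (by omega))
      have hfpos : (0:ℝ) < (Nat.factorial (n/2) : ℝ) := by
        exact_mod_cast Nat.factorial_pos _
      have hfpos1 : (0:ℝ) < (Nat.factorial ((n+1)/2) : ℝ) := by
        exact_mod_cast Nat.factorial_pos _
      -- norm of coefficient
      have hnorm : ‖aCoeff A B x₀ (n+2)‖ ≤ (((n:ℝ)+2)⁻¹) * (M * ‖aCoeff A B x₀ (n+1)‖ + M * ‖aCoeff A B x₀ n‖) := by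
        rw [show aCoeff A B x₀ (n+2) = (((n:ℝ)+2)⁻¹) • (A (aCoeff A B x₀ (n+1)) + B (aCoeff A B x₀ n)) from rfl]
        rw [norm_smul]
        have h1 : ‖A (aCoeff A B x₀ (n+1)) + B (aCoeff A B x₀ n)‖
            ≤ M * ‖aCoeff A B x₀ (n+1)‖ + M * ‖aCoeff A B x₀ n‖ := by
          have := A.le_opNorm (aCoeff A B x₀ (n+1))
          have := B.le_opNorm (aCoeff A B x₀ n)
          have h2 := norm_add_le (A (aCoeff A B x₀ (n+1))) (B (aCoeff A B x₀ n))
          have hn1 := norm_nonneg (aCoeff A B x₀ (n+1))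
          have hn0 := norm_nonneg (aCoeff A B x₀ n)
          nlinarith
        have : ‖(((n:ℝ)+2))⁻¹‖ = ((n:ℝ)+2)⁻¹ := by
          rw [Real.norm_eq_abs, abs_of_pos]; positivity
        rw [this]
        have hinv : (0:ℝ) ≤ ((n:ℝ)+2)⁻¹ := by positivity
        exact mul_le_mul_of_nonneg_left h1 hinv
      --: goal with (n+2)/2
      rw [hfac]
      push_cast [Nat.factorial_succ]
      -- ‖a (n+2)‖ * ((n/2 + 1) * (n/2)!) ≤ ‖x₀‖ * (2M)^(n+2)
      have key1 : ‖aCoeff A B x₀ (n+1)‖ * (Nat.factorial (n/2) : ℝ) ≤ ‖x₀‖ * (2*M)^(n+1) := by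
        calc ‖aCoeff A B x₀ (n+1)‖ * (Nat.factorial (n/2) : ℝ)
            ≤ ‖aCoeff A B x₀ (n+1)‖ * (Nat.factorial ((n+1)/2) : ℝ) := by
              exact mul_le_mul_of_nonneg_left hfacmono (norm_nonneg _)
          _ ≤ ‖x₀‖ * (2*M)^(n+1) := ih1
      have key0 : ‖aCoeff A B x₀ n‖ * (Nat.factorial (n/2) : ℝ) ≤ ‖x₀‖ * (2*M)^(n+1) := by
        calc ‖aCoeff A B x₀ n‖ * (Nat.factorial (n/2) : ℝ) ≤ ‖x₀‖ * (2*M)^n := ih0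
          _ ≤ ‖x₀‖ * (2*M)^(n+1) := by
              have : (2*M)^n ≤ (2*M)^(n+1) := by
                apply pow_le_pow_right₀ (by linarith) (by omega)
              have := norm_nonneg x₀
              nlinarith
      have hdivle : ((n/2 : ℕ) : ℝ) + 1 ≤ (n:ℝ) + 2 := by
        have h := Nat.div_le_self n 2
        have : ((n/2 : ℕ) : ℝ) ≤ (n:ℝ) := by exact_mod_cast h
        linarith
      have hq : (0:ℝ) < (n:ℝ) + 2 := by positivity
      set a := ‖aCoeff A B x₀ (n+2)‖ with ha
      set b1 := ‖aCoeff A B x₀ (n+1)‖ with hb1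
      set b0 := ‖aCoeff A B x₀ n‖ with hb0
      set f := (Nat.factorial (n/2) : ℝ) with hf
      set d := ((n/2 : ℕ) : ℝ) + 1 with hd
      set S := M * b1 + M * b0 with hS
      have hSnn : (0:ℝ) ≤ S := by
        have : (0:ℝ) ≤ b1 := norm_nonneg _
        have : (0:ℝ) ≤ b0 := norm_nonneg _
        positivity
      have hdnn : (0:ℝ) < d := by positivity
      have hratio : ((n:ℝ)+2)⁻¹ * d ≤ 1 := by
        have h1 := mul_le_mul_of_nonneg_left hdivle (le_of_lt (inv_pos.mpr hq))
        rwa [inv_mul_cancel₀ (ne_of_gt hq)] at h1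
      have h1 : a * (d * f) ≤ (((n:ℝ)+2)⁻¹ * S) * (d * f) := by
        apply mul_le_mul_of_nonneg_right hnorm
        positivity
      have h2 : (((n:ℝ)+2)⁻¹ * S) * (d * f) ≤ S * f := by
        calc (((n:ℝ)+2)⁻¹ * S) * (d * f) = (((n:ℝ)+2)⁻¹ * d) * (S * f) := by ring
          _ ≤ 1 * (S * f) := by
              apply mul_le_mul_of_nonneg_right hratio
              positivity
          _ = S * f := one_mul _
      have h3 : S * f = M * (b1 * f) + M * (b0 * f) := by ring
      have h4 := mul_le_mul_of_nonneg_left key1 (le_of_lt hMpos)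
      have h5 := mul_le_mul_of_nonneg_left key0 (le_of_lt hMpos)
      have h6 : M * (‖x₀‖*(2*M)^(n+1)) + M * (‖x₀‖*(2*M)^(n+1)) = ‖x₀‖*((2*M)^(n+1)*(2*M)) := by
        ring
      have h7 : S * f ≤ ‖x₀‖ * ((2*M)^(n+1) * (2*M)) := by
        rw [h3, ← h6]
        exact add_le_add h4 h5
      have hgoal : a * (d * f) ≤ ‖x₀‖ * ((2*M)^(n+1) * (2*M)) := (h1.trans h2).trans h7
      calc a * (d * f) ≤ ‖x₀‖ * ((2*M)^(n+1) * (2*M)) := hgoal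
        _ = ‖x₀‖ * (2*M)^(n+2) := by rw [← pow_succ]

attribute [irreducible] aCoeff

/-- The formal power series with the above coefficients. -/
noncomputable def aSeries : FormalMultilinearSeries ℝ ℝ F :=
  fun n => ContinuousMultilinearMap.mkPiRing ℝ (Fin n) (aCoeff A B x₀ n)

lemma aSeries_norm (n : ℕ) : ‖aSeries A B x₀ n‖ = ‖aCoeff A B x₀ n‖ := by
  simp [aSeries]

lemma aSeries_apply (n : ℕ) (s : ℝ) :
    (aSeries A B x₀ n fun _ => s) = s ^ n • aCoeff A B x₀ n := by
  simp [aSeries, ContinuousMultilinearMap.mkPiRing_apply]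

/-- auxiliary limit: `x^n / (n/2)! → 0`. -/
lemma tendsto_pow_div_halffac {x : ℝ} (hx : 0 ≤ x) :
    Filter.Tendsto (fun n : ℕ => x ^ n / (Nat.factorial (n/2) : ℝ)) Filter.atTop (nhds 0) := by
  have hx2 : Filter.Tendsto (fun k : ℕ => (x^2) ^ k / (Nat.factorial k : ℝ) * (x + 1))
      Filter.atTop (nhds 0) := by
    have h := FloorSemiring.tendsto_pow_div_factorial_atTop (x^2)
    simpa using h.mul_const (x + 1)
  have hdiv : Filter.Tendsto (fun n : ℕ => n / 2) Filter.atTop Filter.atTop :=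
    le_of_eq (Filter.map_div_atTop_eq_nat 2 (by norm_num))
  have hcomp := hx2.comp hdiv
  apply squeeze_zero
  · intro n
    positivity
  · intro n
    have hfpos : (0:ℝ) < (Nat.factorial (n/2) : ℝ) := by exact_mod_cast Nat.factorial_pos _
    have hnum : x ^ n ≤ (x^2) ^ (n/2) * (x + 1) := by
      rcases le_or_gt 1 x with hx1 | hx1
      · have hle : n ≤ 2 * (n/2) + 1 := by omega
        calc x ^ n ≤ x ^ (2 * (n/2) + 1) := pow_le_pow_right₀ hx1 hle
          _ = (x^2) ^ (n/2) * x := by rw [pow_succ, pow_mul]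
          _ ≤ (x^2) ^ (n/2) * (x + 1) := by
              have : (0:ℝ) ≤ (x^2) ^ (n/2) := by positivity
              nlinarith
      · have hle2 : 2 * (n/2) ≤ n := by omega
        calc x ^ n ≤ x ^ (2 * (n/2)) := pow_le_pow_of_le_one hx (le_of_lt hx1) hle2
          _ = (x^2) ^ (n/2) := by rw [pow_mul]
          _ ≤ (x^2) ^ (n/2) * (x + 1) := by
              have : (0:ℝ) ≤ (x^2) ^ (n/2) := by positivity
              nlinarith
    calc x ^ n / (Nat.factorial (n/2) : ℝ) ≤ ((x^2) ^ (n/2) * (x + 1)) / (Nat.factorial (n/2) : ℝ) := by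
          gcongr
      _ = ((fun k : ℕ => (x^2) ^ k / (Nat.factorial k : ℝ) * (x + 1)) ∘ (fun n : ℕ => n / 2)) n := by
          simp [Function.comp]
          ring
  exact hcomp

lemma aSeries_radius : (aSeries A B x₀).radius = ⊤ := by
  rw [eq_top_iff]
  apply ENNReal.le_of_forall_nnreal_lt
  intro r _
  have h0 : (0:ℝ) ≤ 2 * (max ‖A‖ ‖B‖ + 1) * r := by positivity
  have htend : Filter.Tendsto
      (fun n : ℕ => ‖x₀‖ * ((2 * (max ‖A‖ ‖B‖ + 1) * r) ^ n / (Nat.factorial (n/2) : ℝ)))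
      Filter.atTop (nhds 0) := by
    simpa using (tendsto_pow_div_halffac h0).const_mul ‖x₀‖
  obtain ⟨C, hC⟩ := htend.bddAbove_range
  refine FormalMultilinearSeries.le_radius_of_bound _ C (fun n => ?_)
  have hb := aCoeff_bound A B x₀ n
  have hfpos : (0:ℝ) < (Nat.factorial (n/2) : ℝ) := by exact_mod_cast Nat.factorial_pos _
  have hrn : (0:ℝ) ≤ (r:ℝ) ^ n := by positivity
  have h1 : ‖aSeries A B x₀ n‖ * (r:ℝ) ^ n
      ≤ ‖x₀‖ * ((2 * (max ‖A‖ ‖B‖ + 1) * r) ^ n / (Nat.factorial (n/2) : ℝ)) := by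
    have h2 : ‖aCoeff A B x₀ n‖ * (r:ℝ) ^ n * (Nat.factorial (n/2) : ℝ)
        ≤ ‖x₀‖ * (2 * (max ‖A‖ ‖B‖ + 1) * r) ^ n := by
      calc ‖aCoeff A B x₀ n‖ * (r:ℝ) ^ n * (Nat.factorial (n/2) : ℝ)
          = (‖aCoeff A B x₀ n‖ * (Nat.factorial (n/2) : ℝ)) * (r:ℝ) ^ n := by ring
        _ ≤ (‖x₀‖ * (2 * (max ‖A‖ ‖B‖ + 1))^n) * (r:ℝ) ^ n := mul_le_mul_of_nonneg_right hb hrn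
        _ = ‖x₀‖ * (2 * (max ‖A‖ ‖B‖ + 1) * r) ^ n := by rw [mul_assoc, ← mul_pow]
    rw [aSeries_norm, ← mul_div_assoc, le_div_iff₀ hfpos]
    exact h2
  exact h1.trans (hC (Set.mem_range_self n))

/-- The entire solution of `y' = A y + s • B y`, `y 0 = x₀`. -/
noncomputable def aSol : ℝ → F := (aSeries A B x₀).sum

lemma aSol_hasFPowerSeries : HasFPowerSeriesOnBall (aSol A B x₀) (aSeries A B x₀) 0 ⊤ := by
  have h := (aSeries A B x₀).hasFPowerSeriesOnBall (F := F)
    (by rw [aSeries_radius]; exact ENNReal.zero_lt_top)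
  rwa [aSeries_radius] at h

lemma aSol_analyticOnNhd : AnalyticOnNhd ℝ (aSol A B x₀) Set.univ := by
  intro x _
  exact (aSol_hasFPowerSeries A B x₀).analyticAt_of_mem (by simp)

lemma aSol_hasSum (s : ℝ) :
    HasSum (fun n => s ^ n • aCoeff A B x₀ n) (aSol A B x₀ s) := by
  have h := (aSol_hasFPowerSeries A B x₀).hasSum (y := s) (by simp)
  simp only [zero_add] at h
  convert h using 2 with n
  rw [aSeries_apply]

lemma aSol_zero : aSol A B x₀ 0 = x₀ := by
  have h := aSol_hasSum A B x₀ 0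
  have h2 : HasSum (fun n => (0:ℝ) ^ n • aCoeff A B x₀ n) ((0:ℝ) ^ 0 • aCoeff A B x₀ 0) :=
    hasSum_single 0 (fun b hb => by
      rcases Nat.exists_eq_succ_of_ne_zero hb with ⟨k, rfl⟩
      simp [pow_succ])
  have h3 := h2.unique h
  rw [aCoeff_zero] at h3
  simpa using h3.symm

lemma aSol_differentiable : Differentiable ℝ (aSol A B x₀) := fun x =>
  (aSol_analyticOnNhd A B x₀ x trivial).differentiableAt

set_option maxHeartbeats 1000000 in
lemma aSol_deriv (s : ℝ) :
    deriv (aSol A B x₀) s = A (aSol A B x₀ s) + s • B (aSol A B x₀ s) := by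
  -- continuity of both sides, equality off zero
  have hfd := (aSol_hasFPowerSeries A B x₀).fderiv
  have hfderiv_cont : Continuous (fderiv ℝ (aSol A B x₀)) := by
    rw [continuous_iff_continuousAt]
    intro x
    exact ((hfd.analyticAt_of_mem (by simp)).continuousAt)
  have hderiv_eq : deriv (aSol A B x₀) = fun s => fderiv ℝ (aSol A B x₀) s 1 := by
    funext s; rw [fderiv_apply_one_eq_deriv]
  have hcont1 : Continuous (deriv (aSol A B x₀)) := by
    rw [hderiv_eq]
    exact (ContinuousLinearMap.apply ℝ F (1:ℝ)).continuous.comp hfderiv_cont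
  have hcont2 : Continuous (fun s : ℝ => A (aSol A B x₀ s) + s • B (aSol A B x₀ s)) := by
    have hc := (aSol_differentiable A B x₀).continuous
    exact (A.continuous.comp hc).add (continuous_id.smul (B.continuous.comp hc))
  have hne : ∀ s : ℝ, s ≠ 0 → deriv (aSol A B x₀) s
      = A (aSol A B x₀ s) + s • B (aSol A B x₀ s) := by
    intro s hs
    have hY := aSol_hasSum A B x₀ s
    -- sum of evaluated derivative series
    have h := hfd.hasSum (y := s) (by simp)
    simp only [zero_add] at h
    have hds := (ContinuousLinearMap.apply ℝ F s).hasSum h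
    simp only [ContinuousLinearMap.apply_apply] at hds
    -- identify the terms
    have hterm : ∀ n : ℕ, ((aSeries A B x₀).derivSeries n fun _ => s) s
        = s ^ (n+1) • A (aCoeff A B x₀ n)
          + (Nat.casesOn n 0 (fun k => s ^ (k+2) • B (aCoeff A B x₀ k)) : F) := by
      intro n
      rw [FormalMultilinearSeries.derivSeries_apply_diag, aSeries_apply]
      have hsmul : (n + 1) • (s ^ (n+1) • aCoeff A B x₀ (n+1))
          = s ^ (n+1) • (((n:ℝ) + 1) • aCoeff A B x₀ (n+1)) := by
        rw [smul_comm]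
        norm_cast
      rw [hsmul]
      cases n with
      | zero =>
        simp [aCoeff_one, aCoeff_zero]
      | succ k =>
        have hrec := aCoeff_rec A B x₀ k
        push_cast
        rw [show ((k:ℝ) + 1 + 1) = (k:ℝ) + 2 by ring, hrec, smul_add]
    -- sum of right-hand side
    have hA : HasSum (fun n => s ^ (n+1) • A (aCoeff A B x₀ n)) (s • A (aSol A B x₀ s)) := by
      have h1 := (A.hasSum hY).const_smul s
      convert h1 using 2 with n
      rw [A.map_smul, smul_smul, pow_succ, mul_comm]
    have hB : HasSum (fun n => (Nat.casesOn n 0 (fun k => s ^ (k+2) • B (aCoeff A B x₀ k)) : F))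
        ((s*s) • B (aSol A B x₀ s)) := by
      have h1 : HasSum (fun k => s ^ (k+2) • B (aCoeff A B x₀ k)) ((s*s) • B (aSol A B x₀ s)) := by
        have h2 := (B.hasSum hY).const_smul (s*s)
        convert h2 using 2 with k
        rw [B.map_smul, smul_smul]
        congr 1
        ring
      have h3 := (hasSum_nat_add_iff
        (f := fun n => (Nat.casesOn n 0 (fun k => s ^ (k+2) • B (aCoeff A B x₀ k)) : F)) 1).mp
        (by simpa using h1)
      simpa using h3
    have hfun : (fun n => ((aSeries A B x₀).derivSeries n fun _ => s) s)
        = fun n => s ^ (n+1) • A (aCoeff A B x₀ n)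
          + (Nat.casesOn n 0 (fun k => s ^ (k+2) • B (aCoeff A B x₀ k)) : F) := funext hterm
    rw [hfun] at hds
    have heval : (fderiv ℝ (aSol A B x₀) s) s
        = s • A (aSol A B x₀ s) + (s*s) • B (aSol A B x₀ s) := hds.unique (hA.add hB)
    have heval2 : (fderiv ℝ (aSol A B x₀) s) s = s • deriv (aSol A B x₀) s := by
      have h5 := (fderiv ℝ (aSol A B x₀) s).map_smul s (1:ℝ)
      simpa [fderiv_apply_one_eq_deriv] using h5
    have : s • deriv (aSol A B x₀) s = s • (A (aSol A B x₀ s) + s • B (aSol A B x₀ s)) := by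
      rw [← heval2, heval, smul_add, smul_smul]
    exact smul_right_injective F hs this
  exact congrFun (Continuous.ext_on (dense_compl_singleton (0:ℝ)) hcont1 hcont2
    (fun x hx => hne x (by simpa using hx))) s

lemma aSol_hasDerivAt (s : ℝ) :
    HasDerivAt (aSol A B x₀) (A (aSol A B x₀ s) + s • B (aSol A B x₀ s)) s := by
  have h := (aSol_differentiable A B x₀ s).hasDerivAt
  rwa [aSol_deriv A B x₀ s] at h

end analyticSol

section clms

abbrev Pv := Fin 3 → ℝ

noncomputable def pr1 : (Pv × Pv × Pv) →L[ℝ] Pv := ContinuousLinearMap.fst ℝ Pv (Pv × Pv)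
noncomputable def pr2 : (Pv × Pv × Pv) →L[ℝ] Pv :=
  (ContinuousLinearMap.fst ℝ Pv Pv).comp (ContinuousLinearMap.snd ℝ Pv (Pv × Pv))
noncomputable def pr3 : (Pv × Pv × Pv) →L[ℝ] Pv :=
  (ContinuousLinearMap.snd ℝ Pv Pv).comp (ContinuousLinearMap.snd ℝ Pv (Pv × Pv))

noncomputable def frameA (c₀ ε : ℝ) : (Pv × Pv × Pv) →L[ℝ] (Pv × Pv × Pv) :=
  (0 : (Pv × Pv × Pv) →L[ℝ] Pv).prod (((ε * c₀) • pr3).prod ((-c₀) • pr2))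

noncomputable def frameB : (Pv × Pv × Pv) →L[ℝ] (Pv × Pv × Pv) :=
  ((-(1/2 : ℝ)) • pr3).prod ((0 : (Pv × Pv × Pv) →L[ℝ] Pv).prod (((1/2 : ℝ)) • pr1))

noncomputable def s1 : (Pv × Pv × Pv × Pv) →L[ℝ] Pv := ContinuousLinearMap.fst ℝ Pv (Pv × Pv × Pv)
noncomputable def rr : (Pv × Pv × Pv × Pv) →L[ℝ] (Pv × Pv × Pv) :=
  ContinuousLinearMap.snd ℝ Pv (Pv × Pv × Pv)
noncomputable def s2 : (Pv × Pv × Pv × Pv) →L[ℝ] Pv := pr1.comp rr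
noncomputable def s3 : (Pv × Pv × Pv × Pv) →L[ℝ] Pv := pr2.comp rr
noncomputable def s4 : (Pv × Pv × Pv × Pv) →L[ℝ] Pv := pr3.comp rr

noncomputable def sysA (c₀ ε : ℝ) : (Pv × Pv × Pv × Pv) →L[ℝ] (Pv × Pv × Pv × Pv) :=
  s2.prod ((c₀ • s3).prod (((-(ε * c₀)) • s2).prod (0 : (Pv × Pv × Pv × Pv) →L[ℝ] Pv)))

noncomputable def sysB : (Pv × Pv × Pv × Pv) →L[ℝ] (Pv × Pv × Pv × Pv) :=
  (0 : (Pv × Pv × Pv × Pv) →L[ℝ] Pv).prod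
    ((0 : (Pv × Pv × Pv × Pv) →L[ℝ] Pv).prod ((((1/2 : ℝ)) • s4).prod ((-(1/2 : ℝ)) • s3)))

end clms


set_option maxHeartbeats 1000000 in
theorem stmt0 (c₀ ε : ℝ) (hc₀ : 0 < c₀) (hε : ε = 1 ∨ ε = -1)
    (T e₁ e₂ : ℝ → Fin 3 → ℝ)
    (hT : ∀ s, HasDerivAt T (c₀ • e₁ s) s)
    (he₁ : ∀ s, HasDerivAt e₁ ((-(ε * c₀)) • T s + (s / 2) • e₂ s) s)
    (he₂ : ∀ s, HasDerivAt e₂ ((-(s / 2)) • e₁ s) s)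
    (hT0 : T 0 = ![0, 0, 1])
    (he₁0 : e₁ 0 = ![1, 0, 0])
    (he₂0 : e₂ 0 = ![0, 1, 0]) :
    ContDiffOn ℝ (⊤ : ℕ∞) (fun p : ℝ × ℝ => Xfun c₀ T p.1 p.2) (Set.univ ×ˢ Set.Ioi 0) ∧
    ∀ s : ℝ, ∀ t : ℝ, 0 < t →
      deriv (fun τ => Xfun c₀ T s τ) t =
        wedge ε (deriv (fun σ => Xfun c₀ T σ t) s)
          (deriv (deriv (fun σ => Xfun c₀ T σ t)) s) := by
  classical
  have hTd : Differentiable ℝ T := fun s => (hT s).differentiableAt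
  have hTc : Continuous T := hTd.continuous
  have hG : ∀ s, HasDerivAt (Gfun c₀ T) (T s) s := by
    intro s
    have h1 : HasDerivAt (fun u => ∫ σ in (0:ℝ)..u, T σ) (T s) s :=
      intervalIntegral.integral_hasDerivAt_right (hTc.intervalIntegrable _ _)
        (hTc.stronglyMeasurableAtFilter _ _) hTc.continuousAt
    exact h1.const_add ((2 * c₀) • (![0, 1, 0] : Fin 3 → ℝ))
  -- ===== frame identity via ODE uniqueness =====
  have hWd : ∀ s, HasDerivAt
      (fun s => ((wedge ε (T s) (e₁ s) - e₂ s,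
        wedge ε (e₁ s) (e₂ s) - ε • T s,
        wedge ε (e₂ s) (T s) - e₁ s) : Pv × Pv × Pv))
      (frameA c₀ ε (wedge ε (T s) (e₁ s) - e₂ s,
        wedge ε (e₁ s) (e₂ s) - ε • T s,
        wedge ε (e₂ s) (T s) - e₁ s)
        + s • frameB (wedge ε (T s) (e₁ s) - e₂ s,
        wedge ε (e₁ s) (e₂ s) - ε • T s,
        wedge ε (e₂ s) (T s) - e₁ s)) s := by
    intro s
    have h1 := (HasDerivAt.wedge (ε := ε) (hT s) (he₁ s)).sub (he₂ s)
    have h2 := (HasDerivAt.wedge (ε := ε) (he₁ s) (he₂ s)).sub ((hT s).const_smul ε)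
    have h3 := (HasDerivAt.wedge (ε := ε) (he₂ s) (hT s)).sub (he₁ s)
    have h := h1.prodMk (h2.prodMk h3)
    convert h using 1
    · rfl
    refine Prod.ext ?_ (Prod.ext ?_ ?_) <;>
      · funext i
        simp only [frameA, frameB, pr1, pr2, pr3, _root_.wedge,
          ContinuousLinearMap.prod_apply, ContinuousLinearMap.coe_comp',
          ContinuousLinearMap.coe_fst', ContinuousLinearMap.coe_snd',
          ContinuousLinearMap.smul_apply, ContinuousLinearMap.zero_apply,
          Function.comp_apply, Prod.smul_fst, Prod.smul_snd, Prod.fst_add, Prod.snd_add,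
          Pi.add_apply, Pi.sub_apply, Pi.smul_apply, Pi.zero_apply, smul_eq_mul]
        fin_cases i <;>
          simp [_root_.wedge, Matrix.cons_val_zero, Matrix.cons_val_one] <;> ring
  have hz : ∀ s : ℝ, HasDerivAt (fun _ : ℝ => (0 : Pv × Pv × Pv))
      (frameA c₀ ε 0 + s • frameB 0) s := by
    intro s
    simpa using hasDerivAt_const s (0 : Pv × Pv × Pv)
  have hW0 : ((wedge ε (T 0) (e₁ 0) - e₂ 0,
      wedge ε (e₁ 0) (e₂ 0) - ε • T 0,
      wedge ε (e₂ 0) (T 0) - e₁ 0) : Pv × Pv × Pv) = 0 := by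
    rw [hT0, he₁0, he₂0]
    refine Prod.ext ?_ (Prod.ext ?_ ?_) <;>
      · funext i
        fin_cases i <;> simp [_root_.wedge] <;> ring
  have hWzero := linODE_unique (frameA c₀ ε) frameB
    (fun s => ((wedge ε (T s) (e₁ s) - e₂ s,
        wedge ε (e₁ s) (e₂ s) - ε • T s,
        wedge ε (e₂ s) (T s) - e₁ s) : Pv × Pv × Pv))
    (fun _ => (0 : Pv × Pv × Pv)) hWd hz (by simpa using hW0)
  have E1 : ∀ s : ℝ, e₁ s = wedge ε (e₂ s) (T s) := by
    intro s
    have h := congrFun hWzero s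
    have h3 := congrArg (fun p : Pv × Pv × Pv => p.2.2) h
    simp only at h3
    exact (sub_eq_zero.mp h3).symm
  -- ===== key algebraic identity for G =====
  have hkey : ∀ σ : ℝ, Gfun c₀ T σ = (2 * c₀) • wedge ε (T σ) (e₁ σ) + σ • T σ := by
    have hΦd : ∀ σ : ℝ, HasDerivAt
        (fun σ => Gfun c₀ T σ - σ • T σ - (2 * c₀) • wedge ε (T σ) (e₁ σ)) 0 σ := by
      intro σ
      have h1 := (hasDerivAt_id σ).smul (hT σ)
      have h2 := (HasDerivAt.wedge (ε := ε) (hT σ) (he₁ σ)).const_smul (2 * c₀)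
      have h3 := ((hG σ).sub h1).sub h2
      refine h3.congr_deriv ?_
      have hE := E1 σ
      rw [hE]
      funext i
      simp only [Pi.zero_apply, Pi.add_apply, Pi.sub_apply, Pi.smul_apply, smul_eq_mul,
        id_eq]
      fin_cases i <;> simp [_root_.wedge] <;> ring
    have hΦdiff : Differentiable ℝ
        (fun σ => Gfun c₀ T σ - σ • T σ - (2 * c₀) • wedge ε (T σ) (e₁ σ)) :=
      fun s => (hΦd s).differentiableAt
    have hΦf : ∀ x, fderiv ℝ
        (fun σ => Gfun c₀ T σ - σ • T σ - (2 * c₀) • wedge ε (T σ) (e₁ σ)) x = 0 := by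
      intro x
      rw [(hΦd x).hasFDerivAt.fderiv]
      ext v i
      simp
    have hconst := is_const_of_fderiv_eq_zero hΦdiff hΦf
    intro σ
    have h0 : Gfun c₀ T 0 - (0:ℝ) • T 0 - (2 * c₀) • wedge ε (T 0) (e₁ 0) = 0 := by
      rw [hT0, he₁0]
      funext i
      simp only [Gfun, intervalIntegral.integral_same]
      fin_cases i <;> simp [_root_.wedge] <;> ring
    have hc := hconst σ 0
    rw [h0] at hc
    have h5 : Gfun c₀ T σ - σ • T σ = (2 * c₀) • wedge ε (T σ) (e₁ σ) := sub_eq_zero.mp hc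
    exact eq_add_of_sub_eq h5
  -- ===== analyticity via the 4-component system =====
  have hYd : ∀ s, HasDerivAt
      (fun s => ((Gfun c₀ T s, T s, e₁ s, e₂ s) : Pv × Pv × Pv × Pv))
      (sysA c₀ ε (Gfun c₀ T s, T s, e₁ s, e₂ s) + s • sysB (Gfun c₀ T s, T s, e₁ s, e₂ s)) s := by
    intro s
    have h := (hG s).prodMk ((hT s).prodMk ((he₁ s).prodMk (he₂ s)))
    convert h using 1
    refine Prod.ext ?_ (Prod.ext ?_ (Prod.ext ?_ ?_)) <;>
      · funext i
        simp only [sysA, sysB, s1, s2, s3, s4, rr, pr1, pr2, pr3,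
          ContinuousLinearMap.prod_apply, ContinuousLinearMap.coe_comp',
          ContinuousLinearMap.coe_fst', ContinuousLinearMap.coe_snd',
          ContinuousLinearMap.smul_apply, ContinuousLinearMap.zero_apply,
          Function.comp_apply, Prod.smul_fst, Prod.smul_snd, Prod.fst_add, Prod.snd_add,
          Pi.add_apply, Pi.smul_apply, Pi.zero_apply, smul_eq_mul]
        ring
  have hYeq : (fun s => ((Gfun c₀ T s, T s, e₁ s, e₂ s) : Pv × Pv × Pv × Pv))
      = aSol (sysA c₀ ε) sysB (Gfun c₀ T 0, T 0, e₁ 0, e₂ 0) :=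
    linODE_unique _ _ _ _ hYd (fun s => aSol_hasDerivAt _ _ _ s)
      (by rw [aSol_zero])
  have hGanalytic : AnalyticOnNhd ℝ (Gfun c₀ T) univ := by
    have h1 := aSol_analyticOnNhd (sysA c₀ ε) sysB
      ((Gfun c₀ T 0, T 0, e₁ 0, e₂ 0) : Pv × Pv × Pv × Pv)
    have h2 : Gfun c₀ T = fun s => (ContinuousLinearMap.fst ℝ Pv (Pv × Pv × Pv))
        (aSol (sysA c₀ ε) sysB (Gfun c₀ T 0, T 0, e₁ 0, e₂ 0) s) := by
      funext s
      have h3 := congrFun hYeq s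
      simpa using congrArg Prod.fst h3
    rw [h2]
    intro x _
    exact ((ContinuousLinearMap.fst ℝ Pv (Pv × Pv × Pv)).analyticAt _).comp (h1 x trivial)
  have hGsmooth : ContDiff ℝ (⊤ : WithTop ℕ∞) (Gfun c₀ T) := hGanalytic.contDiff
  constructor
  · -- smoothness of X
    have hXdef : (fun p : ℝ × ℝ => Xfun c₀ T p.1 p.2)
        = fun p : ℝ × ℝ => Real.sqrt p.2 • Gfun c₀ T (p.1 / Real.sqrt p.2) := rfl
    rw [hXdef]
    apply ContDiffOn.smul (f := fun p : ℝ × ℝ => Real.sqrt p.2)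
      (g := fun p : ℝ × ℝ => Gfun c₀ T (p.1 / Real.sqrt p.2))
    · intro p hp
      exact ((Real.contDiffAt_sqrt (ne_of_gt hp.2)).comp p contDiffAt_snd).contDiffWithinAt
    · apply (hGsmooth.of_le le_top).comp_contDiffOn
      intro p hp
      have h1 : Real.sqrt p.2 ≠ 0 := ne_of_gt (Real.sqrt_pos.mpr hp.2)
      exact (contDiffAt_fst.div
        ((Real.contDiffAt_sqrt (ne_of_gt hp.2)).comp p contDiffAt_snd) h1).contDiffWithinAt
  · intro s t ht
    have hstpos : 0 < Real.sqrt t := Real.sqrt_pos.mpr ht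
    have hstne : Real.sqrt t ≠ 0 := ne_of_gt hstpos
    have hinner : ∀ u : ℝ, HasDerivAt (fun σ : ℝ => σ / Real.sqrt t) (1 / Real.sqrt t) u := by
      intro u
      simpa using (hasDerivAt_id u).div_const (Real.sqrt t)
    have hS : ∀ u : ℝ, HasDerivAt (fun σ => Xfun c₀ T σ t) (T (u / Real.sqrt t)) u := by
      intro u
      have houter := (hG (u / Real.sqrt t)).scomp u (hinner u)
      have h2 := houter.const_smul (Real.sqrt t)
      have h3 : Real.sqrt t • (1 / Real.sqrt t) • T (u / Real.sqrt t) = T (u / Real.sqrt t) := by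
        rw [smul_smul, mul_one_div, div_self hstne, one_smul]
      rw [h3] at h2
      exact h2
    have hd1 : (deriv fun σ => Xfun c₀ T σ t) = fun u => T (u / Real.sqrt t) :=
      funext fun u => (hS u).deriv
    have hS2 : HasDerivAt (fun u : ℝ => T (u / Real.sqrt t))
        ((1 / Real.sqrt t) • (c₀ • e₁ (s / Real.sqrt t))) s :=
      (hT (s / Real.sqrt t)).scomp s (hinner s)
    have hsq : HasDerivAt Real.sqrt (1 / (2 * Real.sqrt t)) t := Real.hasDerivAt_sqrt (ne_of_gt ht)
    have hinv : HasDerivAt (fun τ : ℝ => (Real.sqrt τ)⁻¹)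
        (-(1 / (2 * Real.sqrt t)) / (Real.sqrt t) ^ 2) t := hsq.inv hstne
    have hinner2 : HasDerivAt (fun τ : ℝ => s / Real.sqrt τ)
        (s * (-(1 / (2 * Real.sqrt t)) / (Real.sqrt t) ^ 2)) t := by
      simpa [div_eq_mul_inv] using hinv.const_mul s
    have hcomp := (hG (s / Real.sqrt t)).scomp t hinner2
    have htd := hsq.smul hcomp
    have e1 : deriv (fun τ => Xfun c₀ T s τ) t
        = Real.sqrt t • ((s * (-(1 / (2 * Real.sqrt t)) / (Real.sqrt t) ^ 2)) •
            T (s / Real.sqrt t))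
          + (1 / (2 * Real.sqrt t)) • Gfun c₀ T (s / Real.sqrt t) := htd.deriv
    have e2 : deriv (fun σ => Xfun c₀ T σ t) s = T (s / Real.sqrt t) := (hS s).deriv
    have e3 : deriv (deriv fun σ => Xfun c₀ T σ t) s
        = (1 / Real.sqrt t) • (c₀ • e₁ (s / Real.sqrt t)) := by
      rw [hd1]
      exact hS2.deriv
    rw [e1, e2, e3, hkey (s / Real.sqrt t)]
    revert hstpos hstne
    generalize Real.sqrt t = u
    intro hupos hune
    funext i
    fin_cases i <;>
      · simp only [_root_.wedge, Pi.add_apply, Pi.smul_apply, smul_eq_mul,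
          Matrix.cons_val_zero, Matrix.cons_val_one, Matrix.head_cons,
          Matrix.cons_val_two, Matrix.tail_cons, Fin.reduceFinMk]
        field_simp
        ring
end
end

section
/- Fix c₀ > 0 and ε ∈ {+1,−1}, and let (T, e₁, e₂) : ℝ → (ℝ³)³ be the unique solution of the linear ODE system T′(s) = c₀ e₁(s), e₁′(s) = −ε c₀ T(s) + (s/2) e₂(s), e₂′(s) = −(s/2) e₁(s) with initial conditions T(0) = (0,0,1), e₁(0) = (1,0,0), e₂(0) = (0,1,0). Then there exist A¹, A² ∈ ℝ³ and C > 0 such that for all s ≥ 1, |T(s) − A¹ + 2c₀ e₂(s)/s| ≤ C/s², and for all s ≤ −1, |T(s) − A² + 2c₀ e₂(s)/s| ≤ C/s². (In particular T(s) → A¹ as s → +∞ and T(s) → A² as s → −∞.) -/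
/-!
Each coordinate row `(x, u, v) = (T j, e₁ j, e₂ j)` solves the scalar version of the system, which
conserves `u² + v² + ε x²`. Since `(u, v)` rotates with angular speed `s / 2`, the drift
`x' = c₀ u = -2 c₀ v' / s` averages out: `x + 2c₀ v / s` has derivative `-2c₀ v / s²`, and
`x + 2c₀ v / s + 4c₀ u / s³` has derivative `O(s⁻³)` as soon as the row is bounded, so it converges
at rate `O(s⁻²)`. Boundedness follows from the conservation law and Gronwall's inequality with the
integrable rate `s⁻²` applied to `(x + 2c₀ v / s)²`. The substitution
`(T, e₁, e₂)(s) ↦ (T, -e₁, -e₂)(-s)` preserves the system and turns `-∞` into `+∞`.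
-/

open MeasureTheory Set Filter Topology

noncomputable section

/-- Generalized scalar product `a ∘_ε b` on ℝ³. -/
def circ (ε : ℝ) (a b : Fin 3 → ℝ) : ℝ :=
  a 0 * b 0 + a 1 * b 1 + ε * (a 2 * b 2)

/-- Euclidean norm on ℝ³. -/
def norm3 (a : Fin 3 → ℝ) : ℝ := Real.sqrt (a 0 ^ 2 + a 1 ^ 2 + a 2 ^ 2)

lemma norm3_le_abs_add_abs_add_abs (a : Fin 3 → ℝ) : norm3 a ≤ |a 0| + |a 1| + |a 2| := by
  refine Real.sqrt_le_iff.2 ⟨by positivity, ?_⟩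
  simp only [← sq_abs (a _)]
  nlinarith [abs_nonneg (a 0), abs_nonneg (a 1), abs_nonneg (a 2)]

lemma sq_le_of_eq_sub_mul {x y δ v K : ℝ} (hx : x = y - δ * v) (hδ₀ : 0 ≤ δ) (hδ : δ ≤ 1 / 2)
    (hv : v ^ 2 ≤ K + x ^ 2) : x ^ 2 ≤ 4 * y ^ 2 + K := by
  have hδv : δ ^ 2 * v ^ 2 ≤ v ^ 2 / 4 := by
    nlinarith [mul_le_mul hδ hδ hδ₀ (by norm_num), sq_nonneg v]
  have hxy : x ^ 2 ≤ 2 * y ^ 2 + 2 * (δ ^ 2 * v ^ 2) := by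
    rw [hx]
    nlinarith [sq_nonneg (y + δ * v)]
  linarith

lemma le_mul_exp_of_deriv_le_div_sq {f f' : ℝ → ℝ} {a k : ℝ} (ha : 0 < a) (hk : 0 ≤ k)
    (hf : ∀ s, a ≤ s → HasDerivAt f (f' s) s) (hf' : ∀ s, a ≤ s → f' s ≤ k / s ^ 2 * f s)
    (hf₀ : ∀ s, a ≤ s → 0 ≤ f s) (s : ℝ) (hs : a ≤ s) :
    f s ≤ f a * Real.exp (k / a) := by
  have hg : ∀ r, a ≤ r → HasDerivAt (fun r => f r * Real.exp (k / r))
      (Real.exp (k / r) * (f' r - k / r ^ 2 * f r)) r := fun r hr => by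
    have hr0 : r ≠ 0 := (ha.trans_le hr).ne'
    have := (hf r hr).mul ((hasDerivAt_inv hr0).const_mul k).exp
    simp only [← div_eq_mul_inv] at this
    exact this.congr_deriv (by ring)
  have hanti : AntitoneOn (fun r => f r * Real.exp (k / r)) (Ici a) := by
    refine antitoneOn_of_deriv_nonpos (convex_Ici a)
      (fun r hr => (hg r hr).continuousAt.continuousWithinAt)
      (fun r hr => ?_) (fun r hr => ?_) <;> rw [interior_Ici] at hr
    · exact (hg r hr.le).differentiableAt.differentiableWithinAt
    · rw [(hg r hr.le).deriv]
      exact mul_nonpos_of_nonneg_of_nonpos (Real.exp_pos _).le (sub_nonpos.2 (hf' r hr.le))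
  calc f s ≤ f s * Real.exp (k / s) :=
        le_mul_of_one_le_right (hf₀ s hs) (Real.one_le_exp (div_nonneg hk (ha.le.trans hs)))
    _ ≤ f a * Real.exp (k / a) := hanti self_mem_Ici hs hs

lemma sub_le_of_deriv_le_div_cube {f f' : ℝ → ℝ} {a C : ℝ} (ha : 0 < a)
    (hf : ∀ s, a ≤ s → HasDerivAt f (f' s) s) (hf' : ∀ s, a ≤ s → f' s ≤ C / s ^ 3)
    {s t : ℝ} (hs : a ≤ s) (hst : s ≤ t) :
    f t - f s ≤ C / (2 * s ^ 2) - C / (2 * t ^ 2) := by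
  have hg : ∀ r, a ≤ r → HasDerivAt (fun r => f r + C / (2 * r ^ 2)) (f' r - C / r ^ 3) r :=
    fun r hr => by
      have hr0 : r ≠ 0 := (ha.trans_le hr).ne'
      exact ((hf r hr).add ((hasDerivAt_const r C).div
        ((hasDerivAt_pow 2 r).const_mul 2) (by positivity))).congr_deriv (by field_simp; ring)
  have hanti : AntitoneOn (fun r => f r + C / (2 * r ^ 2)) (Ici a) := by
    refine antitoneOn_of_deriv_nonpos (convex_Ici a)
      (fun r hr => (hg r hr).continuousAt.continuousWithinAt)
      (fun r hr => ?_) (fun r hr => ?_) <;> rw [interior_Ici] at hr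
    · exact (hg r hr.le).differentiableAt.differentiableWithinAt
    · rw [(hg r hr.le).deriv]
      exact sub_nonpos.2 (hf' r hr.le)
  have := hanti hs (hs.trans hst : a ≤ t) hst
  simp only at this
  linarith

lemma exists_tendsto_of_abs_deriv_le_div_cube {f f' : ℝ → ℝ} {a C : ℝ} (ha : 0 < a)
    (hf : ∀ s, a ≤ s → HasDerivAt f (f' s) s) (hf' : ∀ s, a ≤ s → |f' s| ≤ C / s ^ 3) :
    ∃ L, Tendsto f atTop (𝓝 L) ∧ ∀ s, a ≤ s → |f s - L| ≤ C / (2 * s ^ 2) := by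
  have hC : 0 ≤ C := by
    simpa using (le_div_iff₀ (pow_pos ha 3)).1 ((abs_nonneg _).trans (hf' a le_rfl))
  have hcauchy : ∀ s t, a ≤ s → s ≤ t → |f t - f s| ≤ C / (2 * s ^ 2) := fun s t hs hst => by
    have hup := sub_le_of_deriv_le_div_cube ha hf (fun r hr => (abs_le.1 (hf' r hr)).2) hs hst
    have hlow := sub_le_of_deriv_le_div_cube (f := fun r => -f r) ha
      (fun r hr => (hf r hr).neg) (fun r hr => neg_le.1 (abs_le.1 (hf' r hr)).1) hs hst
    have : 0 ≤ C / (2 * t ^ 2) := div_nonneg hC (by positivity)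
    exact abs_le.2 ⟨by linarith, by linarith⟩
  have hsmall : Tendsto (fun s : ℝ => C / (2 * s ^ 2)) atTop (𝓝 0) :=
    tendsto_const_nhds.div_atTop
      ((tendsto_pow_atTop two_ne_zero).const_mul_atTop two_pos)
  obtain ⟨L, hL⟩ := cauchySeq_tendsto_of_complete <| Metric.cauchySeq_iff'.2 fun δ hδ => by
    obtain ⟨N, hNa, hNδ⟩ :=
      ((eventually_ge_atTop a).and (hsmall.eventually (gt_mem_nhds hδ))).exists
    exact ⟨N, fun n hn => (Real.dist_eq _ _ ▸ hcauchy N n hNa hn).trans_lt hNδ⟩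
  refine ⟨L, hL, fun s hs => ?_⟩
  rw [abs_sub_comm]
  refine le_of_tendsto ((hL.sub_const (f s)).abs) ?_
  filter_upwards [eventually_ge_atTop s] with t ht using hcauchy s t hs ht

lemma tendsto_of_abs_sub_add_div_mul_le {x v : ℝ → ℝ} {L a C M : ℝ}
    (hx : ∀ s, 1 ≤ s → |x s - L + a / s * v s| ≤ C / s ^ 2) (hv : ∀ s, 1 ≤ s → |v s| ≤ M) :
    Tendsto x atTop (𝓝 L) := by
  have hsmall : Tendsto (fun s : ℝ => C / s ^ 2 + |a| * M / s) atTop (𝓝 0) := by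
    have h₁ : Tendsto (fun s : ℝ => C / s ^ 2) atTop (𝓝 0) :=
      tendsto_const_nhds.div_atTop (tendsto_pow_atTop two_ne_zero)
    have h₂ : Tendsto (fun s : ℝ => |a| * M / s) atTop (𝓝 0) :=
      tendsto_const_nhds.div_atTop tendsto_id
    simpa using h₁.add h₂
  rw [tendsto_iff_norm_sub_tendsto_zero]
  refine squeeze_zero' (Eventually.of_forall fun s => norm_nonneg _) ?_ hsmall
  filter_upwards [eventually_ge_atTop 1] with s hs
  have hav : |a / s * v s| ≤ |a| * M / s := by
    rw [abs_mul, abs_div, abs_of_pos (one_pos.trans_le hs), div_mul_eq_mul_div]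
    gcongr
    exact hv s hs
  calc ‖x s - L‖ = |(x s - L + a / s * v s) - a / s * v s| := by
        rw [Real.norm_eq_abs]; ring_nf
    _ ≤ C / s ^ 2 + |a| * M / s := (abs_sub _ _).trans (add_le_add (hx s hs) hav)

structure FrameODE {E : Type*} [NormedAddCommGroup E] [NormedSpace ℝ E] (c₀ ε : ℝ)
    (T e₁ e₂ : ℝ → E) : Prop where
  hasDerivAt_T : ∀ s, HasDerivAt T (c₀ • e₁ s) s
  hasDerivAt_e₁ : ∀ s, HasDerivAt e₁ ((-(ε * c₀)) • T s + (s / 2) • e₂ s) s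
  hasDerivAt_e₂ : ∀ s, HasDerivAt e₂ ((-(s / 2)) • e₁ s) s

namespace FrameODE

section General

variable {E F : Type*} [NormedAddCommGroup E] [NormedSpace ℝ E] [NormedAddCommGroup F]
  [NormedSpace ℝ F] {c₀ ε : ℝ} {T e₁ e₂ : ℝ → E}

lemma map (h : FrameODE c₀ ε T e₁ e₂) (φ : E →L[ℝ] F) :
    FrameODE c₀ ε (fun s => φ (T s)) (fun s => φ (e₁ s)) (fun s => φ (e₂ s)) where
  hasDerivAt_T s :=
    (φ.hasFDerivAt.comp_hasDerivAt s (h.hasDerivAt_T s)).congr_deriv (by simp)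
  hasDerivAt_e₁ s :=
    (φ.hasFDerivAt.comp_hasDerivAt s (h.hasDerivAt_e₁ s)).congr_deriv (by simp)
  hasDerivAt_e₂ s :=
    (φ.hasFDerivAt.comp_hasDerivAt s (h.hasDerivAt_e₂ s)).congr_deriv (by simp)

lemma comp_neg (h : FrameODE c₀ ε T e₁ e₂) :
    FrameODE c₀ ε (fun s => T (-s)) (fun s => -e₁ (-s)) (fun s => -e₂ (-s)) where
  hasDerivAt_T s := ((h.hasDerivAt_T (-s)).scomp s (hasDerivAt_neg s)).congr_deriv (by simp)
  hasDerivAt_e₁ s := ((h.hasDerivAt_e₁ (-s)).scomp s (hasDerivAt_neg s)).neg.congr_deriv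
    (by simp [neg_div, add_comm])
  hasDerivAt_e₂ s := ((h.hasDerivAt_e₂ (-s)).scomp s (hasDerivAt_neg s)).neg.congr_deriv
    (by simp [neg_div])

end General

variable {c₀ ε : ℝ} {x u v : ℝ → ℝ}

lemma energy_eq (h : FrameODE c₀ ε x u v) (s : ℝ) :
    u s ^ 2 + v s ^ 2 + ε * x s ^ 2 = u 0 ^ 2 + v 0 ^ 2 + ε * x 0 ^ 2 := by
  have hE : ∀ r, HasDerivAt (fun r => u r ^ 2 + v r ^ 2 + ε * x r ^ 2) 0 r := fun r => by
    have := (((h.hasDerivAt_e₁ r).pow 2).add ((h.hasDerivAt_e₂ r).pow 2)).add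
      (((h.hasDerivAt_T r).pow 2).const_mul ε)
    exact this.congr_deriv (by simp only [smul_eq_mul]; ring)
  exact is_const_of_deriv_eq_zero (fun r => (hE r).differentiableAt) (fun r => (hE r).deriv) s 0

lemma sq_add_sq_le (h : FrameODE c₀ ε x u v) (hε : -1 ≤ ε) (s : ℝ) :
    u s ^ 2 + v s ^ 2 ≤ |u 0 ^ 2 + v 0 ^ 2 + ε * x 0 ^ 2| + x s ^ 2 := by
  have := h.energy_eq s
  nlinarith [le_abs_self (u 0 ^ 2 + v 0 ^ 2 + ε * x 0 ^ 2), sq_nonneg (x s)]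

lemma hasDerivAt_add_div (h : FrameODE c₀ ε x u v) {s : ℝ} (hs : s ≠ 0) :
    HasDerivAt (fun r => x r + 2 * c₀ * v r / r) (-(2 * c₀ * v s / s ^ 2)) s := by
  have := (h.hasDerivAt_T s).add (((h.hasDerivAt_e₂ s).const_mul (2 * c₀)).div (hasDerivAt_id s) hs)
  exact this.congr_deriv (by simp only [smul_eq_mul, id]; field_simp; ring)

lemma hasDerivAt_add_div_add_div (h : FrameODE c₀ ε x u v) {s : ℝ} (hs : s ≠ 0) :
    HasDerivAt (fun r => x r + 2 * c₀ * v r / r + 4 * c₀ * u r / r ^ 3)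
      (-(4 * ε * c₀ ^ 2 * x s / s ^ 3) - 12 * c₀ * u s / s ^ 4) s := by
  have := (h.hasDerivAt_add_div hs).add
    (((h.hasDerivAt_e₁ s).const_mul (4 * c₀)).div (hasDerivAt_pow 3 s) (pow_ne_zero 3 hs))
  exact this.congr_deriv (by simp only [smul_eq_mul]; field_simp; ring)

lemma exists_sq_add_sq_add_sq_le_of_le (h : FrameODE c₀ ε x u v) (hc₀ : 0 ≤ c₀)
    (hε : -1 ≤ ε) :
    ∃ M, ∀ s, max 1 (4 * c₀) ≤ s → x s ^ 2 + u s ^ 2 + v s ^ 2 ≤ M := by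
  set K := |u 0 ^ 2 + v 0 ^ 2 + ε * x 0 ^ 2|
  set a := max 1 (4 * c₀)
  have ha : 0 < a := lt_max_of_lt_left one_pos
  have hsa : ∀ s, a ≤ s → 0 < s := fun s hs => ha.trans_le hs
  have hK : 0 ≤ K := abs_nonneg _
  have huv : ∀ s, u s ^ 2 + v s ^ 2 ≤ K + x s ^ 2 := h.sq_add_sq_le hε
  set H := fun r => x r + 2 * c₀ * v r / r
  have hxH : ∀ s, a ≤ s → x s ^ 2 ≤ 4 * H s ^ 2 + K := fun s hs => by
    have hδ : 2 * c₀ / s ≤ 1 / 2 := by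
      rw [div_le_iff₀ (hsa s hs)]
      linarith [le_max_right 1 (4 * c₀)]
    have hδ₀ : 0 ≤ 2 * c₀ / s := div_nonneg (by positivity) (hsa s hs).le
    exact sq_le_of_eq_sub_mul (by simp only [H]; ring) hδ₀ hδ
      ((le_add_of_nonneg_left (sq_nonneg _)).trans (huv s))
  have hf : ∀ s, a ≤ s → HasDerivAt (fun r => H r ^ 2 + K)
      (2 * H s * -(2 * c₀ * v s / s ^ 2)) s := fun s hs => by
    simpa using ((h.hasDerivAt_add_div (hsa s hs).ne').pow 2).add_const K
  have hf' : ∀ s, a ≤ s → 2 * H s * -(2 * c₀ * v s / s ^ 2) ≤ 10 * c₀ / s ^ 2 * (H s ^ 2 + K) :=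
    fun s hs => by
      have hHv : -(4 * H s * v s) ≤ 10 * (H s ^ 2 + K) := by
        nlinarith [sq_nonneg (H s + v s), sq_nonneg (u s), huv s, hxH s hs]
      have hw : 0 ≤ c₀ / s ^ 2 := div_nonneg hc₀ (sq_nonneg s)
      calc 2 * H s * -(2 * c₀ * v s / s ^ 2) = c₀ / s ^ 2 * -(4 * H s * v s) := by ring
        _ ≤ c₀ / s ^ 2 * (10 * (H s ^ 2 + K)) := mul_le_mul_of_nonneg_left hHv hw
        _ = 10 * c₀ / s ^ 2 * (H s ^ 2 + K) := by ring
  refine ⟨8 * ((H a ^ 2 + K) * Real.exp (10 * c₀ / a)), fun s hs => ?_⟩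
  have hgron := le_mul_exp_of_deriv_le_div_sq ha (by positivity) hf hf'
    (fun s _ => by positivity) s hs
  nlinarith [huv s, hxH s hs]

lemma exists_abs_le (h : FrameODE c₀ ε x u v) (hc₀ : 0 ≤ c₀) (hε : -1 ≤ ε) :
    ∃ M, ∀ s, 1 ≤ s → |x s| ≤ M ∧ |u s| ≤ M ∧ |v s| ≤ M := by
  obtain ⟨M₁, hM₁⟩ := h.exists_sq_add_sq_add_sq_le_of_le hc₀ hε
  have hcont : Continuous fun s => x s ^ 2 + u s ^ 2 + v s ^ 2 := by
    have hx := continuous_iff_continuousAt.2 fun s => (h.hasDerivAt_T s).continuousAt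
    have hu := continuous_iff_continuousAt.2 fun s => (h.hasDerivAt_e₁ s).continuousAt
    have hv := continuous_iff_continuousAt.2 fun s => (h.hasDerivAt_e₂ s).continuousAt
    fun_prop
  obtain ⟨M₀, hM₀⟩ :=
    (isCompact_Icc (a := 1) (b := max 1 (4 * c₀))).bddAbove_image hcont.continuousOn
  have hN : ∀ s, 1 ≤ s → x s ^ 2 + u s ^ 2 + v s ^ 2 ≤ max M₀ M₁ := fun s hs => by
    rcases le_total s (max 1 (4 * c₀)) with hsa | hsa
    · exact le_max_of_le_left (hM₀ ⟨s, ⟨hs, hsa⟩, rfl⟩)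
    · exact le_max_of_le_right (hM₁ s hsa)
  refine ⟨√(max M₀ M₁), fun s hs => ⟨?_, ?_, ?_⟩⟩ <;> apply Real.abs_le_sqrt <;>
    nlinarith [hN s hs, sq_nonneg (x s), sq_nonneg (u s), sq_nonneg (v s)]

lemma exists_tendsto (h : FrameODE c₀ ε x u v) (hc₀ : 0 ≤ c₀) (hε : -1 ≤ ε) :
    ∃ L C, (∀ s, 1 ≤ s → |x s - L + 2 * c₀ / s * v s| ≤ C / s ^ 2) ∧ Tendsto x atTop (𝓝 L) := by
  obtain ⟨M, hM⟩ := h.exists_abs_le hc₀ hε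
  have hM₀ : 0 ≤ M := (abs_nonneg _).trans (hM 1 le_rfl).1
  have hderiv : ∀ s, 1 ≤ s →
      |-(4 * ε * c₀ ^ 2 * x s / s ^ 3) - 12 * c₀ * u s / s ^ 4| ≤
        (4 * c₀ ^ 2 * |ε| * M + 12 * c₀ * M) / s ^ 3 := fun s hs => by
    have hs₀ : 0 < s := one_pos.trans_le hs
    obtain ⟨hx, hu, -⟩ := hM s hs
    rw [show -(4 * ε * c₀ ^ 2 * x s / s ^ 3) - 12 * c₀ * u s / s ^ 4
        = -(4 * c₀ ^ 2 * (ε * x s) + 12 * c₀ * (u s / s)) / s ^ 3 by field_simp; ring,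
      abs_div, abs_neg, abs_of_pos (pow_pos hs₀ 3)]
    gcongr
    calc |4 * c₀ ^ 2 * (ε * x s) + 12 * c₀ * (u s / s)|
        ≤ 4 * c₀ ^ 2 * (|ε| * |x s|) + 12 * c₀ * (|u s| / s) := by
          refine (abs_add_le _ _).trans_eq ?_
          simp [abs_mul, abs_div, abs_of_nonneg hc₀, abs_of_pos hs₀]
      _ ≤ 4 * c₀ ^ 2 * |ε| * M + 12 * c₀ * M := by
          have : |u s| / s ≤ M := (div_le_self (abs_nonneg _) hs).trans hu
          rw [mul_assoc _ |ε|]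
          gcongr
  obtain ⟨L, hL, hrate⟩ := exists_tendsto_of_abs_deriv_le_div_cube one_pos
    (fun s hs => h.hasDerivAt_add_div_add_div (one_pos.trans_le hs).ne') hderiv
  set C := (4 * c₀ ^ 2 * |ε| * M + 12 * c₀ * M) / 2 + 4 * c₀ * M with hC
  have hbound : ∀ s, 1 ≤ s → |x s - L + 2 * c₀ / s * v s| ≤ C / s ^ 2 := fun s hs => by
    have hs₀ : 0 < s := one_pos.trans_le hs
    have hu : |4 * c₀ * u s / s ^ 3| ≤ 4 * c₀ * M / s ^ 2 := by
      rw [abs_div, abs_mul, abs_of_nonneg (by positivity : 0 ≤ 4 * c₀), abs_of_pos (pow_pos hs₀ 3)]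
      gcongr
      · exact (hM s hs).2.1
      · norm_num
    calc |x s - L + 2 * c₀ / s * v s|
        = |(x s + 2 * c₀ * v s / s + 4 * c₀ * u s / s ^ 3 - L) - 4 * c₀ * u s / s ^ 3| := by
          ring_nf
      _ ≤ |x s + 2 * c₀ * v s / s + 4 * c₀ * u s / s ^ 3 - L| + |4 * c₀ * u s / s ^ 3| :=
          abs_sub _ _
      _ ≤ (4 * c₀ ^ 2 * |ε| * M + 12 * c₀ * M) / (2 * s ^ 2) + 4 * c₀ * M / s ^ 2 :=
          add_le_add (hrate s hs) hu
      _ = C / s ^ 2 := by rw [hC]; field_simp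
  exact ⟨L, C, hbound, tendsto_of_abs_sub_add_div_mul_le hbound fun s hs => (hM s hs).2.2⟩

lemma exists_tendsto_pi {T e₁ e₂ : ℝ → Fin 3 → ℝ} (h : FrameODE c₀ ε T e₁ e₂) (hc₀ : 0 ≤ c₀)
    (hε : -1 ≤ ε) :
    ∃ A C, (∀ s, 1 ≤ s → norm3 (T s - A + (2 * c₀ / s) • e₂ s) ≤ C / s ^ 2) ∧
      Tendsto T atTop (𝓝 A) := by
  choose L C hC hL using fun j => (h.map (ContinuousLinearMap.proj j)).exists_tendsto hc₀ hε
  refine ⟨L, C 0 + C 1 + C 2, fun s hs => ?_, tendsto_pi_nhds.2 hL⟩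
  calc norm3 (T s - L + (2 * c₀ / s) • e₂ s)
      ≤ |T s 0 - L 0 + 2 * c₀ / s * e₂ s 0| + |T s 1 - L 1 + 2 * c₀ / s * e₂ s 1|
        + |T s 2 - L 2 + 2 * c₀ / s * e₂ s 2| := norm3_le_abs_add_abs_add_abs _
    _ ≤ C 0 / s ^ 2 + C 1 / s ^ 2 + C 2 / s ^ 2 := by
        gcongr <;> exact hC _ s hs
    _ = (C 0 + C 1 + C 2) / s ^ 2 := by ring

end FrameODE

theorem stmt2_general (c₀ ε : ℝ) (hc₀ : 0 < c₀) (hε : ε = 1 ∨ ε = -1)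
    (T e₁ e₂ : ℝ → Fin 3 → ℝ)
    (hT : ∀ s, HasDerivAt T (c₀ • e₁ s) s)
    (he₁ : ∀ s, HasDerivAt e₁ ((-(ε * c₀)) • T s + (s / 2) • e₂ s) s)
    (he₂ : ∀ s, HasDerivAt e₂ ((-(s / 2)) • e₁ s) s) :
    ∃ (A1 A2 : Fin 3 → ℝ) (C : ℝ), 0 < C ∧
      (∀ s : ℝ, 1 ≤ s → norm3 (T s - A1 + (2 * c₀ / s) • e₂ s) ≤ C / s ^ 2) ∧
      (∀ s : ℝ, s ≤ -1 → norm3 (T s - A2 + (2 * c₀ / s) • e₂ s) ≤ C / s ^ 2) ∧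
      Tendsto T atTop (𝓝 A1) ∧ Tendsto T atBot (𝓝 A2) := by
  have h : FrameODE c₀ ε T e₁ e₂ := ⟨hT, he₁, he₂⟩
  have hε' : -1 ≤ ε := by rcases hε with rfl | rfl <;> norm_num
  obtain ⟨A1, C1, hC1, hA1⟩ := h.exists_tendsto_pi hc₀.le hε'
  obtain ⟨A2, C2, hC2, hA2⟩ := h.comp_neg.exists_tendsto_pi hc₀.le hε'
  have hC : ∀ s, C1 / s ^ 2 ≤ (|C1| + |C2| + 1) / s ^ 2 ∧ C2 / s ^ 2 ≤ (|C1| + |C2| + 1) / s ^ 2 :=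
    fun s => ⟨by gcongr; linarith [le_abs_self C1, abs_nonneg C2],
      by gcongr; linarith [le_abs_self C2, abs_nonneg C1]⟩
  refine ⟨A1, A2, |C1| + |C2| + 1, by positivity, fun s hs => (hC1 s hs).trans (hC s).1,
    fun s hs => ?_, hA1, by simpa [Function.comp_def] using hA2.comp tendsto_neg_atBot_atTop⟩
  have := hC2 (-s) (by linarith)
  simp only [neg_neg, neg_sq, div_neg, neg_smul_neg] at this
  exact this.trans (hC s).2

theorem stmt2 (c₀ ε : ℝ) (hc₀ : 0 < c₀) (hε : ε = 1 ∨ ε = -1)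
    (T e₁ e₂ : ℝ → Fin 3 → ℝ)
    (hT : ∀ s, HasDerivAt T (c₀ • e₁ s) s)
    (he₁ : ∀ s, HasDerivAt e₁ ((-(ε * c₀)) • T s + (s / 2) • e₂ s) s)
    (he₂ : ∀ s, HasDerivAt e₂ ((-(s / 2)) • e₁ s) s)
    (hT0 : T 0 = ![0, 0, 1])
    (he₁0 : e₁ 0 = ![1, 0, 0])
    (he₂0 : e₂ 0 = ![0, 1, 0]) :
    ∃ (A1 A2 : Fin 3 → ℝ) (C : ℝ), 0 < C ∧
      (∀ s : ℝ, 1 ≤ s → norm3 (T s - A1 + (2 * c₀ / s) • e₂ s) ≤ C / s ^ 2) ∧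
      (∀ s : ℝ, s ≤ -1 → norm3 (T s - A2 + (2 * c₀ / s) • e₂ s) ≤ C / s ^ 2) ∧
      Tendsto T atTop (𝓝 A1) ∧ Tendsto T atBot (𝓝 A2) :=
  stmt2_general c₀ ε hc₀ hε T e₁ e₂ hT he₁ he₂
end
end

section
/- Fix c₀ > 0 and ε ∈ {+1,−1}, and let (T, e₁, e₂) : ℝ → (ℝ³)³ be the unique solution of the linear ODE system T′(s) = c₀ e₁(s), e₁′(s) = −ε c₀ T(s) + (s/2) e₂(s), e₂′(s) = −(s/2) e₁(s) with initial conditions T(0) = (0,0,1), e₁(0) = (1,0,0), e₂(0) = (0,1,0). Define G(s) := 2c₀·(0,1,0) + ∫₀ˢ T(σ) dσ, and let A¹ := lim_{s→+∞} T(s), A² := lim_{s→−∞} T(s) (these limits exist). Then there is a constant C > 0 such that for all s ≥ 1, |G(s) − A¹·(s + 2ε c₀²/s) + 4c₀ e₁(s)/s²| ≤ C/|s|³, and for all s ≤ −1, |G(s) − A²·(s + 2ε c₀²/s) + 4c₀ e₁(s)/s²| ≤ C/|s|³. -/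
open MeasureTheory Set Filter Topology

noncomputable section

/-
Since `(s T + 2c₀ e₂)' = T`, we have `G(s) = s T(s) + 2c₀ e₂(s)`, and the claim says that
`W := T + (2c₀/s) e₂ + (4c₀/s³) e₁ - (2εc₀²/s²) A¹` satisfies `W - A¹ = O(s⁻⁴)`.
The quantity `‖e₁‖² + ‖e₂‖² + ε‖T‖²` is conserved, so the frame is bounded wherever `T` is.
A function converging at `+∞` whose derivative is `O(s⁻⁽ⁿ⁺¹⁾)` is within `O(s⁻ⁿ)` of its limit;
applied to `T + (2c₀/s) e₂`, to `W` and to a further correction of `W`, whose derivatives are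
`O(s⁻²)`, `O(s⁻⁴)` and `O(s⁻⁶)` given the previous step, this bootstraps `T - A¹ = O(s⁻¹)` up to
`W - A¹ = O(s⁻⁴)`. The case `s → -∞` follows from the symmetry
`(T, e₁, e₂)(s) ↦ (T, -e₁, -e₂)(-s)` of the system.
-/

open Asymptotics

section Decay

variable {E : Type*} [NormedAddCommGroup E]

lemma isBigO_inv_pow_of_le {k n : ℕ} (hkn : k ≤ n) :
    (fun s : ℝ => (s ^ n)⁻¹) =O[𝓟 (Ici 1)] fun s => (s ^ k)⁻¹ := by
  refine IsBigO.of_bound' (eventually_principal.2 fun s (hs : 1 ≤ s) => ?_)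
  have hs₀ : 0 < s := one_pos.trans_le hs
  simp only [norm_inv, norm_pow, Real.norm_of_nonneg hs₀.le]
  exact inv_anti₀ (by positivity) (pow_le_pow_right₀ hs hkn)

lemma Asymptotics.IsBigO.const_div_pow_smul [NormedSpace ℝ E] {l : Filter ℝ} {v : ℝ → E} {m : ℕ}
    (hv : v =O[l] fun s => (s ^ m)⁻¹) (a : ℝ) (k : ℕ) :
    (fun s => (a / s ^ k) • v s) =O[l] fun s => (s ^ (k + m))⁻¹ :=
  (((isBigO_refl (fun s : ℝ => (s ^ k)⁻¹) l).const_mul_left a).smul hv).congr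
    (fun s => by rw [div_eq_mul_inv]) (fun s => by rw [smul_eq_mul, pow_add, mul_inv])

lemma Asymptotics.IsBigO.tendsto_zero_of_inv_pow {f : ℝ → E} {k : ℕ} (hk : k ≠ 0)
    (hf : f =O[𝓟 (Ici 1)] fun s => (s ^ k)⁻¹) : Tendsto f atTop (𝓝 0) :=
  (hf.mono (le_principal_iff.2 (Ici_mem_atTop 1))).trans_tendsto
    (tendsto_inv_atTop_zero.comp (tendsto_pow_atTop hk))

lemma tendsto_const_div_pow_smul [NormedSpace ℝ E] {v : ℝ → E}
    (hv : v =O[𝓟 (Ici 1)] fun _ => (1 : ℝ)) (a : ℝ) {k : ℕ} (hk : k ≠ 0) :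
    Tendsto (fun s => (a / s ^ k) • v s) atTop (𝓝 0) :=
  ((hv.congr_right (g₂ := fun s => (s ^ 0)⁻¹) fun _ => by simp).const_div_pow_smul a k
    ).tendsto_zero_of_inv_pow hk

lemma hasDerivAt_const_div_pow (a : ℝ) (n : ℕ) {s : ℝ} (hs : s ≠ 0) :
    HasDerivAt (fun σ => a / σ ^ n) (-(a * n) / s ^ (n + 1)) s := by
  refine ((hasDerivAt_const s a).div (hasDerivAt_pow n s) (pow_ne_zero n hs)).congr_deriv ?_
  rcases n with _ | n
  · simp
  · rw [Nat.add_sub_cancel]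
    field_simp
    ring

lemma isBigO_sub_of_tendsto_of_hasDerivAt [NormedSpace ℝ E] {f f' : ℝ → E} {L : E} {n : ℕ}
    (hn : n ≠ 0) (hf : ∀ s ∈ Ici (1 : ℝ), HasDerivAt f (f' s) s)
    (hf' : f' =O[𝓟 (Ici 1)] fun s => (s ^ (n + 1))⁻¹) (hL : Tendsto f atTop (𝓝 L)) :
    (fun s => f s - L) =O[𝓟 (Ici 1)] fun s => (s ^ n)⁻¹ := by
  obtain ⟨c, hc₀, hc⟩ := hf'.exists_pos
  rw [isBigOWith_principal] at hc
  refine IsBigO.of_bound (c / n) (eventually_principal.2 fun s (hs : 1 ≤ s) => ?_)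
  have hs₀ : 0 < s := one_pos.trans_le hs
  have hn' : (n : ℝ) ≠ 0 := Nat.cast_ne_zero.2 hn
  have hB : ∀ σ ∈ Ici s, HasDerivAt (fun σ => c / n / s ^ n - c / n / σ ^ n)
      (c / σ ^ (n + 1)) σ := fun σ hσ => by
    refine ((hasDerivAt_const_div_pow (c / n) n (hs₀.trans_le hσ).ne').const_sub _).congr_deriv
      ?_
    field_simp
  have hbound : ∀ b, s ≤ b → ‖f b - f s‖ ≤ c / n / s ^ n := fun b hb => by
    have := image_norm_le_of_norm_deriv_right_le_deriv_boundary' (f := fun σ => f σ - f s)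
      (a := s) (b := b) (f' := f') (B := fun σ => c / n / s ^ n - c / n / σ ^ n)
      (fun σ hσ => ((hf σ (hs.trans hσ.1)).sub_const _).continuousAt.continuousWithinAt)
      (fun σ hσ => ((hf σ (hs.trans hσ.1)).sub_const _).hasDerivWithinAt)
      (by simp) (fun σ hσ => (hB σ hσ.1).continuousAt.continuousWithinAt)
      (fun σ hσ => (hB σ hσ.1).hasDerivWithinAt)
      (fun σ hσ => by
        simpa [Real.norm_of_nonneg (hs₀.trans_le hσ.1).le, div_eq_mul_inv]
          using hc σ (hs.trans hσ.1))
      ⟨hb, le_rfl⟩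
    refine this.trans ?_
    have hb₀ : 0 < b := hs₀.trans_le hb
    have : 0 ≤ c / n / b ^ n := by positivity
    linarith
  have := le_of_tendsto ((hL.sub_const (f s)).norm) (eventually_atTop.2 ⟨s, hbound⟩)
  rw [norm_sub_rev] at this
  simpa [Real.norm_of_nonneg hs₀.le, div_eq_mul_inv] using this

lemma isBigO_one_of_tendsto_atTop {f : ℝ → E} {a : ℝ} {L : E} (hf : ContinuousOn f (Ici a))
    (hL : Tendsto f atTop (𝓝 L)) : f =O[𝓟 (Ici a)] fun _ => (1 : ℝ) := by
  obtain ⟨c, hc⟩ := (hL.isBigO_one ℝ).bound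
  obtain ⟨b, hb⟩ := eventually_atTop.1 hc
  have hcover : Ici a ⊆ Icc a b ∪ Ici b := fun s hs =>
    (le_total s b).elim (fun h => Or.inl ⟨hs, h⟩) Or.inr
  have hcompact : f =O[𝓟 (Icc a b)] fun _ => (1 : ℝ) :=
    (hf.mono Icc_subset_Ici_self).isBigO_principal isCompact_Icc (by norm_num)
  refine (hcompact.sup
    (IsBigO.of_bound c (eventually_principal.2 fun s (hs : s ∈ Ici b) => hb s hs))).mono ?_
  rw [sup_principal]
  exact principal_mono.2 hcover

end Decay

section Corrections

variable {E : Type*} [NormedAddCommGroup E] [NormedSpace ℝ E]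

-- Successive corrections of `T` (`correctedT₂` is the `W` above): each adds the terms that
-- integrate the slowest part of the previous derivative, via `e₁ = -(2/s) e₂'` and
-- `e₂ = (2/s) (e₁' + ε c₀ T)`.
def correctedT₁ (c₀ : ℝ) (T e₂ : ℝ → E) (s : ℝ) : E := T s + (2 * c₀ / s) • e₂ s

def correctedT₂ (c₀ ε : ℝ) (T e₁ e₂ : ℝ → E) (A : E) (s : ℝ) : E :=
  correctedT₁ c₀ T e₂ s + (4 * c₀ / s ^ 3) • e₁ s - (2 * ε * c₀ ^ 2 / s ^ 2) • A

def correctedT₃ (c₀ ε : ℝ) (T e₁ e₂ : ℝ → E) (A : E) (s : ℝ) : E :=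
  correctedT₂ c₀ ε T e₁ e₂ A s - (16 * ε * c₀ ^ 3 / s ^ 5) • e₁ s - (24 * c₀ / s ^ 5) • e₂ s
    + (2 * ε ^ 2 * c₀ ^ 4 / s ^ 4) • A

end Corrections

structure IsFrameSolution {E : Type*} [NormedAddCommGroup E] [NormedSpace ℝ E] (c₀ ε : ℝ)
    (T e₁ e₂ : ℝ → E) : Prop where
  hasDerivAt_T : ∀ s, HasDerivAt T (c₀ • e₁ s) s
  hasDerivAt_e₁ : ∀ s, HasDerivAt e₁ ((-(ε * c₀)) • T s + (s / 2) • e₂ s) s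
  hasDerivAt_e₂ : ∀ s, HasDerivAt e₂ ((-(s / 2)) • e₁ s) s

namespace IsFrameSolution

section NormedSpace

variable {E F : Type*} [NormedAddCommGroup E] [NormedSpace ℝ E] [NormedAddCommGroup F]
  [NormedSpace ℝ F] {c₀ ε : ℝ} {T e₁ e₂ : ℝ → E} {A : E}

lemma continuous_T (h : IsFrameSolution c₀ ε T e₁ e₂) : Continuous T :=
  continuous_iff_continuousAt.2 fun s => (h.hasDerivAt_T s).continuousAt

lemma map (h : IsFrameSolution c₀ ε T e₁ e₂) (L : E →L[ℝ] F) :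
    IsFrameSolution c₀ ε (L ∘ T) (L ∘ e₁) (L ∘ e₂) where
  hasDerivAt_T s := by simpa using L.hasFDerivAt.comp_hasDerivAt s (h.hasDerivAt_T s)
  hasDerivAt_e₁ s := by simpa using L.hasFDerivAt.comp_hasDerivAt s (h.hasDerivAt_e₁ s)
  hasDerivAt_e₂ s := by simpa using L.hasFDerivAt.comp_hasDerivAt s (h.hasDerivAt_e₂ s)

lemma comp_neg (h : IsFrameSolution c₀ ε T e₁ e₂) :
    IsFrameSolution c₀ ε (fun s => T (-s)) (fun s => -e₁ (-s)) (fun s => -e₂ (-s)) where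
  hasDerivAt_T s := by
    refine ((h.hasDerivAt_T (-s)).scomp s (hasDerivAt_neg s)).congr_deriv ?_
    module
  hasDerivAt_e₁ s := by
    refine ((h.hasDerivAt_e₁ (-s)).scomp s (hasDerivAt_neg s)).neg.congr_deriv ?_
    module
  hasDerivAt_e₂ s := by
    refine ((h.hasDerivAt_e₂ (-s)).scomp s (hasDerivAt_neg s)).neg.congr_deriv ?_
    module

lemma integral_T [CompleteSpace E] (h : IsFrameSolution c₀ ε T e₁ e₂) (s : ℝ) :
    ∫ σ in (0 : ℝ)..s, T σ = s • T s + (2 * c₀) • e₂ s - (2 * c₀) • e₂ 0 := by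
  have hF : ∀ σ, HasDerivAt (fun τ => τ • T τ + (2 * c₀) • e₂ τ) (T σ) σ := fun σ => by
    refine (((hasDerivAt_id σ).smul (h.hasDerivAt_T σ)).add
      ((h.hasDerivAt_e₂ σ).const_smul (2 * c₀))).congr_deriv ?_
    simp only [id_eq]
    module
  rw [intervalIntegral.integral_eq_sub_of_hasDerivAt (fun σ _ => hF σ)
    (h.continuous_T.intervalIntegrable 0 s)]
  simp

lemma hasDerivAt_correctedT₁ (h : IsFrameSolution c₀ ε T e₁ e₂) {s : ℝ} (hs : s ≠ 0) :
    HasDerivAt (correctedT₁ c₀ T e₂) ((-(2 * c₀) / s ^ 2) • e₂ s) s := by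
  have hc := hasDerivAt_const_div_pow (2 * c₀) 1 hs
  simp only [pow_one] at hc
  refine ((h.hasDerivAt_T s).add (hc.smul (h.hasDerivAt_e₂ s))).congr_deriv ?_
  match_scalars <;> field_simp
  ring

lemma hasDerivAt_correctedT₂ (h : IsFrameSolution c₀ ε T e₁ e₂) {s : ℝ} (hs : s ≠ 0) :
    HasDerivAt (correctedT₂ c₀ ε T e₁ e₂ A)
      ((-(4 * ε * c₀ ^ 2) / s ^ 3) • (T s - A) + (-(12 * c₀) / s ^ 4) • e₁ s) s := by
  refine (((h.hasDerivAt_correctedT₁ hs).add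
    ((hasDerivAt_const_div_pow (4 * c₀) 3 hs).smul (h.hasDerivAt_e₁ s))).sub
    ((hasDerivAt_const_div_pow (2 * ε * c₀ ^ 2) 2 hs).smul_const A)).congr_deriv ?_
  match_scalars <;> field_simp <;> ring

lemma hasDerivAt_correctedT₃ (h : IsFrameSolution c₀ ε T e₁ e₂) {s : ℝ} (hs : s ≠ 0) :
    HasDerivAt (correctedT₃ c₀ ε T e₁ e₂ A)
      ((-(4 * ε * c₀ ^ 2) / s ^ 3) • (correctedT₂ c₀ ε T e₁ e₂ A s - A)
        + (16 * ε ^ 2 * c₀ ^ 4 / s ^ 5) • (T s - A) + (96 * ε * c₀ ^ 3 / s ^ 6) • e₁ s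
        + (120 * c₀ / s ^ 6) • e₂ s) s := by
  refine ((((h.hasDerivAt_correctedT₂ hs).sub
    ((hasDerivAt_const_div_pow (16 * ε * c₀ ^ 3) 5 hs).smul (h.hasDerivAt_e₁ s))).sub
    ((hasDerivAt_const_div_pow (24 * c₀) 5 hs).smul (h.hasDerivAt_e₂ s))).add
    ((hasDerivAt_const_div_pow (2 * ε ^ 2 * c₀ ^ 4) 4 hs).smul_const A)).congr_deriv ?_
  simp only [correctedT₂, correctedT₁]
  match_scalars <;> field_simp <;> ring

lemma tendsto_correctedT₁ (hA : Tendsto T atTop (𝓝 A))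
    (he₂ : e₂ =O[𝓟 (Ici 1)] fun _ => (1 : ℝ)) :
    Tendsto (correctedT₁ c₀ T e₂) atTop (𝓝 A) := by
  have := hA.add (tendsto_const_div_pow_smul he₂ (2 * c₀) one_ne_zero)
  simp only [pow_one, add_zero] at this
  exact this

lemma tendsto_correctedT₂ (hA : Tendsto T atTop (𝓝 A))
    (he₁ : e₁ =O[𝓟 (Ici 1)] fun _ => (1 : ℝ)) (he₂ : e₂ =O[𝓟 (Ici 1)] fun _ => (1 : ℝ)) :
    Tendsto (correctedT₂ c₀ ε T e₁ e₂ A) atTop (𝓝 A) := by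
  have := ((tendsto_correctedT₁ (c₀ := c₀) hA he₂).add
    (tendsto_const_div_pow_smul he₁ (4 * c₀) three_ne_zero)).sub
    (tendsto_const_div_pow_smul (isBigO_const_const A one_ne_zero _) (2 * ε * c₀ ^ 2) two_ne_zero)
  simp only [add_zero, sub_zero] at this
  exact this

lemma tendsto_correctedT₃ (hA : Tendsto T atTop (𝓝 A))
    (he₁ : e₁ =O[𝓟 (Ici 1)] fun _ => (1 : ℝ)) (he₂ : e₂ =O[𝓟 (Ici 1)] fun _ => (1 : ℝ)) :
    Tendsto (correctedT₃ c₀ ε T e₁ e₂ A) atTop (𝓝 A) := by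
  have := (((tendsto_correctedT₂ (c₀ := c₀) (ε := ε) hA he₁ he₂).sub
    (tendsto_const_div_pow_smul he₁ (16 * ε * c₀ ^ 3) (k := 5) (by norm_num))).sub
    (tendsto_const_div_pow_smul he₂ (24 * c₀) (k := 5) (by norm_num))).add
    (tendsto_const_div_pow_smul (isBigO_const_const A one_ne_zero _) (2 * ε ^ 2 * c₀ ^ 4)
      (k := 4) (by norm_num))
  simp only [add_zero, sub_zero] at this
  exact this

lemma isBigO_correctedT₂_sub (h : IsFrameSolution c₀ ε T e₁ e₂) (hA : Tendsto T atTop (𝓝 A))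
    (he₁ : e₁ =O[𝓟 (Ici 1)] fun _ => (1 : ℝ)) (he₂ : e₂ =O[𝓟 (Ici 1)] fun _ => (1 : ℝ)) :
    (fun s => correctedT₂ c₀ ε T e₁ e₂ A s - A) =O[𝓟 (Ici 1)] fun s => (s ^ 4)⁻¹ := by
  have hbdd {v : ℝ → E} (hv : v =O[𝓟 (Ici 1)] fun _ => (1 : ℝ)) :
      v =O[𝓟 (Ici 1)] fun s => (s ^ 0)⁻¹ := hv.congr_right fun _ => by simp
  have hne : ∀ s ∈ Ici (1 : ℝ), s ≠ 0 := fun s hs => (one_pos.trans_le hs).ne'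
  have hT₁ : (fun s => correctedT₁ c₀ T e₂ s - A) =O[𝓟 (Ici 1)] fun s => (s ^ 1)⁻¹ :=
    isBigO_sub_of_tendsto_of_hasDerivAt one_ne_zero
      (fun s hs => h.hasDerivAt_correctedT₁ (hne s hs)) ((hbdd he₂).const_div_pow_smul _ 2)
      (tendsto_correctedT₁ hA he₂)
  have hT : (fun s => T s - A) =O[𝓟 (Ici 1)] fun s => (s ^ 1)⁻¹ :=
    (hT₁.sub ((hbdd he₂).const_div_pow_smul (2 * c₀) 1)).congr_left fun s => by
      simp only [correctedT₁, pow_one]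
      abel
  have hT₂ : (fun s => correctedT₂ c₀ ε T e₁ e₂ A s - A) =O[𝓟 (Ici 1)] fun s => (s ^ 3)⁻¹ :=
    isBigO_sub_of_tendsto_of_hasDerivAt three_ne_zero
      (fun s hs => h.hasDerivAt_correctedT₂ (hne s hs))
      ((hT.const_div_pow_smul _ 3).add ((hbdd he₁).const_div_pow_smul _ 4))
      (tendsto_correctedT₂ hA he₁ he₂)
  have hT₃ : (fun s => correctedT₃ c₀ ε T e₁ e₂ A s - A) =O[𝓟 (Ici 1)] fun s => (s ^ 5)⁻¹ :=
    isBigO_sub_of_tendsto_of_hasDerivAt (by norm_num)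
      (fun s hs => h.hasDerivAt_correctedT₃ (hne s hs))
      ((((hT₂.const_div_pow_smul _ 3).add (hT.const_div_pow_smul _ 5)).add
        ((hbdd he₁).const_div_pow_smul _ 6)).add ((hbdd he₂).const_div_pow_smul _ 6))
      (tendsto_correctedT₃ hA he₁ he₂)
  have hmono {k : ℕ} (hk : 4 ≤ k) := isBigO_inv_pow_of_le hk
  refine ((((hT₃.trans (hmono (by norm_num))).add
    (((hbdd he₁).const_div_pow_smul (16 * ε * c₀ ^ 3) 5).trans (hmono (by norm_num)))).add
    ((hbdd he₂).const_div_pow_smul (24 * c₀) 5 |>.trans (hmono (by norm_num)))).sub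
    ((hbdd (isBigO_const_const A one_ne_zero _)).const_div_pow_smul
      (2 * ε ^ 2 * c₀ ^ 4) 4)).congr_left fun s => ?_
  simp only [correctedT₃]
  abel

theorem isBigO_expansion_atTop_of_isBigO_one (h : IsFrameSolution c₀ ε T e₁ e₂)
    (hA : Tendsto T atTop (𝓝 A)) (he₁ : e₁ =O[𝓟 (Ici 1)] fun _ => (1 : ℝ))
    (he₂ : e₂ =O[𝓟 (Ici 1)] fun _ => (1 : ℝ)) :
    (fun s => s • T s + (2 * c₀) • e₂ s - (s + 2 * ε * c₀ ^ 2 / s) • A + (4 * c₀ / s ^ 2) • e₁ s)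
      =O[𝓟 (Ici 1)] fun s => (s ^ 3)⁻¹ := by
  have hne : ∀ s ∈ Ici (1 : ℝ), s ≠ 0 := fun s hs => (one_pos.trans_le hs).ne'
  refine ((isBigO_refl (fun s : ℝ => s) _).smul (h.isBigO_correctedT₂_sub hA he₁ he₂)).congr'
    (eventually_principal.2 fun s hs => ?_) (eventually_principal.2 fun s hs => ?_)
  · have := hne s hs
    simp only [correctedT₂, correctedT₁]
    match_scalars <;> field_simp
    ring
  · have := hne s hs
    simp only [smul_eq_mul]
    field_simp

end NormedSpace

section InnerProductSpace

variable {E : Type*} [NormedAddCommGroup E] [InnerProductSpace ℝ E] {c₀ ε : ℝ}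
  {T e₁ e₂ : ℝ → E} {A : E}

lemma energy_eq (h : IsFrameSolution c₀ ε T e₁ e₂) (s : ℝ) :
    ‖e₁ s‖ ^ 2 + ‖e₂ s‖ ^ 2 + ε * ‖T s‖ ^ 2 = ‖e₁ 0‖ ^ 2 + ‖e₂ 0‖ ^ 2 + ε * ‖T 0‖ ^ 2 := by
  have hd : ∀ σ, HasDerivAt (fun σ => ‖e₁ σ‖ ^ 2 + ‖e₂ σ‖ ^ 2 + ε * ‖T σ‖ ^ 2) 0 σ := fun σ => by
    refine (((h.hasDerivAt_e₁ σ).norm_sq.add (h.hasDerivAt_e₂ σ).norm_sq).add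
      ((h.hasDerivAt_T σ).norm_sq.const_mul ε)).congr_deriv ?_
    simp only [inner_add_right, real_inner_smul_right, real_inner_comm (e₁ σ)]
    ring
  exact is_const_of_deriv_eq_zero (fun σ => (hd σ).differentiableAt) (fun σ => (hd σ).deriv) s 0

lemma isBigO_one_e₁_e₂ {l : Filter ℝ} (h : IsFrameSolution c₀ ε T e₁ e₂)
    (hT : T =O[l] fun _ => (1 : ℝ)) :
    (e₁ =O[l] fun _ => (1 : ℝ)) ∧ (e₂ =O[l] fun _ => (1 : ℝ)) := by
  obtain ⟨M, hM⟩ := hT.bound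
  set K := ‖e₁ 0‖ ^ 2 + ‖e₂ 0‖ ^ 2 + ε * ‖T 0‖ ^ 2
  have key : ∀ᶠ s in l, ‖e₁ s‖ ^ 2 + ‖e₂ s‖ ^ 2 ≤ K + |ε| * M ^ 2 := hM.mono fun s hs => by
    rw [norm_one, mul_one] at hs
    have hTs : ‖T s‖ ^ 2 ≤ M ^ 2 := pow_le_pow_left₀ (norm_nonneg _) hs 2
    nlinarith [h.energy_eq s, neg_abs_le ε, abs_nonneg ε, sq_nonneg ‖T s‖]
  constructor <;> refine IsBigO.of_bound (√(K + |ε| * M ^ 2)) (key.mono fun s hs => ?_) <;>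
    rw [norm_one, mul_one, ← abs_norm] <;> apply Real.abs_le_sqrt
  · nlinarith [sq_nonneg ‖e₂ s‖]
  · nlinarith [sq_nonneg ‖e₁ s‖]

theorem isBigO_expansion_atTop (h : IsFrameSolution c₀ ε T e₁ e₂) (hA : Tendsto T atTop (𝓝 A)) :
    (fun s => s • T s + (2 * c₀) • e₂ s - (s + 2 * ε * c₀ ^ 2 / s) • A + (4 * c₀ / s ^ 2) • e₁ s)
      =O[𝓟 (Ici 1)] fun s => (s ^ 3)⁻¹ :=
  have ⟨he₁, he₂⟩ :=
    h.isBigO_one_e₁_e₂ (isBigO_one_of_tendsto_atTop h.continuous_T.continuousOn hA)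
  h.isBigO_expansion_atTop_of_isBigO_one hA he₁ he₂

theorem isBigO_expansion_atBot (h : IsFrameSolution c₀ ε T e₁ e₂) (hA : Tendsto T atBot (𝓝 A)) :
    (fun s => s • T s + (2 * c₀) • e₂ s - (s + 2 * ε * c₀ ^ 2 / s) • A + (4 * c₀ / s ^ 2) • e₁ s)
      =O[𝓟 (Iic (-1))] fun s => ((-s) ^ 3)⁻¹ := by
  have hneg : Tendsto (fun s : ℝ => -s) (𝓟 (Iic (-1))) (𝓟 (Ici 1)) :=
    tendsto_principal_principal.2 fun s (hs : s ≤ -1) => show 1 ≤ -s by linarith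
  refine ((h.comp_neg.isBigO_expansion_atTop (hA.comp tendsto_neg_atTop_atBot)).comp_tendsto
    hneg).neg_left.congr_left fun s => ?_
  simp only [Function.comp, neg_neg]
  match_scalars <;> ring

end InnerProductSpace

end IsFrameSolution

lemma norm3_eq_norm (a : Fin 3 → ℝ) : norm3 a = ‖(EuclideanSpace.equiv (Fin 3) ℝ).symm a‖ := by
  simp [norm3, EuclideanSpace.norm_eq, Fin.sum_univ_three]

theorem stmt3_general (c₀ ε : ℝ)
    (T e₁ e₂ : ℝ → Fin 3 → ℝ)
    (hT : ∀ s, HasDerivAt T (c₀ • e₁ s) s)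
    (he₁ : ∀ s, HasDerivAt e₁ ((-(ε * c₀)) • T s + (s / 2) • e₂ s) s)
    (he₂ : ∀ s, HasDerivAt e₂ ((-(s / 2)) • e₁ s) s)
    (he₂0 : e₂ 0 = ![0, 1, 0])
    (A1 A2 : Fin 3 → ℝ)
    (hA1 : Tendsto T atTop (𝓝 A1)) (hA2 : Tendsto T atBot (𝓝 A2)) :
    ∃ C : ℝ, 0 < C ∧
      (∀ s : ℝ, 1 ≤ s →
        norm3 (Gfun c₀ T s - (s + 2 * ε * c₀ ^ 2 / s) • A1 + (4 * c₀ / s ^ 2) • e₁ s)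
          ≤ C / |s| ^ 3) ∧
      (∀ s : ℝ, s ≤ -1 →
        norm3 (Gfun c₀ T s - (s + 2 * ε * c₀ ^ 2 / s) • A2 + (4 * c₀ / s ^ 2) • e₁ s)
          ≤ C / |s| ^ 3) := by
  have h : IsFrameSolution c₀ ε T e₁ e₂ := ⟨hT, he₁, he₂⟩
  set L := (EuclideanSpace.equiv (Fin 3) ℝ).symm
  have hL := h.map L.toContinuousLinearMap
  have hLim {l : Filter ℝ} {A : Fin 3 → ℝ} (hA : Tendsto T l (𝓝 A)) :
      Tendsto (L ∘ T) l (𝓝 (L A)) := (L.continuous.tendsto A).comp hA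
  obtain ⟨C₁, hC₁, h₁⟩ := (hL.isBigO_expansion_atTop (hLim hA1)).exists_pos
  obtain ⟨C₂, -, h₂⟩ := (hL.isBigO_expansion_atBot (hLim hA2)).exists_pos
  rw [isBigOWith_principal] at h₁ h₂
  have hG (s : ℝ) (A : Fin 3 → ℝ) :
      norm3 (Gfun c₀ T s - (s + 2 * ε * c₀ ^ 2 / s) • A + (4 * c₀ / s ^ 2) • e₁ s) =
        ‖s • L (T s) + (2 * c₀) • L (e₂ s) - (s + 2 * ε * c₀ ^ 2 / s) • L A
          + (4 * c₀ / s ^ 2) • L (e₁ s)‖ := by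
    rw [norm3_eq_norm, Gfun, h.integral_T, he₂0, add_sub_cancel]
    simp only [map_add, map_sub, map_smul]
    rfl
  refine ⟨max C₁ C₂, lt_max_of_lt_left hC₁, fun s hs => ?_, fun s hs => ?_⟩
  · rw [hG]
    refine (h₁ s hs).trans ?_
    simp only [norm_inv, norm_pow, Real.norm_eq_abs, div_eq_mul_inv]
    gcongr
    exact le_max_left _ _
  · rw [hG]
    refine (h₂ s hs).trans ?_
    simp only [norm_inv, norm_pow, Real.norm_eq_abs, abs_neg, div_eq_mul_inv]
    gcongr
    exact le_max_right _ _

theorem stmt3 (c₀ ε : ℝ) (hc₀ : 0 < c₀) (hε : ε = 1 ∨ ε = -1)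
    (T e₁ e₂ : ℝ → Fin 3 → ℝ)
    (hT : ∀ s, HasDerivAt T (c₀ • e₁ s) s)
    (he₁ : ∀ s, HasDerivAt e₁ ((-(ε * c₀)) • T s + (s / 2) • e₂ s) s)
    (he₂ : ∀ s, HasDerivAt e₂ ((-(s / 2)) • e₁ s) s)
    (hT0 : T 0 = ![0, 0, 1])
    (he₁0 : e₁ 0 = ![1, 0, 0])
    (he₂0 : e₂ 0 = ![0, 1, 0])
    (A1 A2 : Fin 3 → ℝ)
    (hA1 : Tendsto T atTop (𝓝 A1)) (hA2 : Tendsto T atBot (𝓝 A2)) :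
    ∃ C : ℝ, 0 < C ∧
      (∀ s : ℝ, 1 ≤ s →
        norm3 (Gfun c₀ T s - (s + 2 * ε * c₀ ^ 2 / s) • A1 + (4 * c₀ / s ^ 2) • e₁ s)
          ≤ C / |s| ^ 3) ∧
      (∀ s : ℝ, s ≤ -1 →
        norm3 (Gfun c₀ T s - (s + 2 * ε * c₀ ^ 2 / s) • A2 + (4 * c₀ / s ^ 2) • e₁ s)
          ≤ C / |s| ^ 3) :=
  stmt3_general c₀ ε T e₁ e₂ hT he₁ he₂ he₂0 A1 A2 hA1 hA2
end
end

section
/- Fix c₀ > 0 and ε ∈ {+1,−1}, and let (T, e₁, e₂) : ℝ → (ℝ³)³ be the unique solution of the linear ODE system T′(s) = c₀ e₁(s), e₁′(s) = −ε c₀ T(s) + (s/2) e₂(s), e₂′(s) = −(s/2) e₁(s) with initial conditions T(0) = (0,0,1), e₁(0) = (1,0,0), e₂(0) = (0,1,0). Then for every s ∈ ℝ: T(−s) = (−T₁(s), −T₂(s), T₃(s)), e₁(−s) = (e₁,₁(s), e₁,₂(s), −e₁,₃(s)), and e₂(−s) = (e₂,₁(s), e₂,₂(s), −e₂,₃(s)),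 where subscripts denote the components of the vectors. -/
open MeasureTheory Set Filter Topology

noncomputable section

/-! The system is linear, `x' = A(s) x` for `x = (T, e₁, e₂)`, with `A` continuous in `s`, so a
solution is determined by its value at `0`. With `D = diag(1, 1, -1)`, the map `R = (-D, D, D)`
satisfies `R ∘ A(-s) = -A(s) ∘ R`; hence `s ↦ R x(-s)` solves the same system, and it starts at
`x(0)` because `R` fixes the initial frame. Uniqueness gives `R x(-s) = x(s)`. -/

notation "ℝ³" => Fin 3 → ℝ

section LinearODE

variable {E : Type*} [NormedAddCommGroup E] [NormedSpace ℝ E]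

theorem linearODE_solution_unique {A : ℝ → E →L[ℝ] E} (hA : Continuous A) {f g : ℝ → E}
    (hf : ∀ t, HasDerivAt f (A t (f t)) t) (hg : ∀ t, HasDerivAt g (A t (g t)) t) {t₀ : ℝ}
    (heq : f t₀ = g t₀) : f = g := by
  funext t
  set b := |t| + |t₀| + 1
  obtain ⟨K, hK⟩ := isCompact_Icc.exists_bound_of_continuousOn (hA.continuousOn (s := Icc (-b) b))
  have hLip (u) (hu : u ∈ Ioo (-b) b) : LipschitzOnWith K.toNNReal (A u) univ := by
    refine ((A u).lipschitz.weaken ?_).lipschitzOnWith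
    rw [← norm_toNNReal]
    exact Real.toNNReal_le_toNNReal (hK u (Ioo_subset_Icc_self hu))
  have hmem {u} (hu : |u| < b) : u ∈ Ioo (-b) b := abs_lt.mp hu
  exact ODE_solution_unique_of_mem_Ioo hLip (hmem (by grind)) (fun u _ => ⟨hf u, trivial⟩)
    (fun u _ => ⟨hg u, trivial⟩) heq (hmem (by grind))

theorem linearODE_map_solution_neg_eq {A : ℝ → E →L[ℝ] E} (hA : Continuous A) {R : E →L[ℝ] E}
    (hRA : ∀ t, R ∘L A (-t) = -(A t ∘L R)) {x : ℝ → E} (hx : ∀ t, HasDerivAt x (A t (x t)) t)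
    (hx0 : R (x 0) = x 0) (t : ℝ) : R (x (-t)) = x t := by
  have hRx (u : ℝ) : HasDerivAt (fun u => R (x (-u))) (A u (R (x (-u)))) u := by
    refine (R.hasFDerivAt.comp_hasDerivAt u ((hx (-u)).scomp u (hasDerivAt_neg u))).congr_deriv ?_
    have h := congrArg (· (x (-u))) (hRA u)
    simp only [ContinuousLinearMap.comp_apply, neg_apply] at h
    simp [h]
  exact congrFun (linearODE_solution_unique hA hRx hx (t₀ := 0) (by simpa using hx0)) t

end LinearODE

abbrev Frame := ℝ³ × ℝ³ × ℝ³

def frameGenerator (c₀ ε s : ℝ) : Frame →L[ℝ] Frame :=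
  let T := ContinuousLinearMap.fst ℝ ℝ³ (ℝ³ × ℝ³)
  let e₁ := (ContinuousLinearMap.fst ℝ ℝ³ ℝ³).comp (ContinuousLinearMap.snd ℝ ℝ³ (ℝ³ × ℝ³))
  let e₂ := (ContinuousLinearMap.snd ℝ ℝ³ ℝ³).comp (ContinuousLinearMap.snd ℝ ℝ³ (ℝ³ × ℝ³))
  (c₀ • e₁).prod (((-(ε * c₀)) • T + (s / 2) • e₂).prod ((-(s / 2)) • e₁))

@[simp]
theorem frameGenerator_apply (c₀ ε s : ℝ) (p : Frame) :
    frameGenerator c₀ ε s p =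
      (c₀ • p.2.1, (-(ε * c₀)) • p.1 + (s / 2) • p.2.2, (-(s / 2)) • p.2.1) :=
  rfl

theorem continuous_frameGenerator (c₀ ε : ℝ) : Continuous (frameGenerator c₀ ε) :=
  continuous_clm_apply.mpr fun p => by simp only [frameGenerator_apply]; fun_prop

def frameReflection (D : ℝ³ →L[ℝ] ℝ³) : Frame →L[ℝ] Frame :=
  (-D).prodMap (D.prodMap D)

theorem frameReflection_comp_frameGenerator_neg (D : ℝ³ →L[ℝ] ℝ³) (c₀ ε s : ℝ) :
    frameReflection D ∘L frameGenerator c₀ ε (-s) =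
      -(frameGenerator c₀ ε s ∘L frameReflection D) := by
  refine ContinuousLinearMap.ext fun p => Prod.ext ?_ (Prod.ext ?_ ?_) <;>
    simp [frameReflection] <;> module

def flipLast : ℝ³ →L[ℝ] ℝ³ := ContinuousLinearMap.mul ℝ ℝ³ ![1, 1, -1]

theorem flipLast_apply (a : ℝ³) : flipLast a = ![a 0, a 1, -(a 2)] := by
  ext i; fin_cases i <;> simp [flipLast]

theorem stmt7_general (c₀ ε : ℝ)
    (T e₁ e₂ : ℝ → Fin 3 → ℝ)
    (hT : ∀ s, HasDerivAt T (c₀ • e₁ s) s)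
    (he₁ : ∀ s, HasDerivAt e₁ ((-(ε * c₀)) • T s + (s / 2) • e₂ s) s)
    (he₂ : ∀ s, HasDerivAt e₂ ((-(s / 2)) • e₁ s) s)
    (hT0 : T 0 = ![0, 0, 1])
    (he₁0 : e₁ 0 = ![1, 0, 0])
    (he₂0 : e₂ 0 = ![0, 1, 0]) :
    ∀ s : ℝ,
      T (-s) = ![-(T s 0), -(T s 1), T s 2] ∧
      e₁ (-s) = ![e₁ s 0, e₁ s 1, -(e₁ s 2)] ∧
      e₂ (-s) = ![e₂ s 0, e₂ s 1, -(e₂ s 2)] := by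
  intro s
  have hx (t : ℝ) : HasDerivAt (fun t => (T t, e₁ t, e₂ t))
      (frameGenerator c₀ ε t (T t, e₁ t, e₂ t)) t :=
    (hT t).prodMk ((he₁ t).prodMk (he₂ t))
  have hx0 : frameReflection flipLast (T 0, e₁ 0, e₂ 0) = (T 0, e₁ 0, e₂ 0) := by
    simp [frameReflection, flipLast_apply, hT0, he₁0, he₂0]
  have h := linearODE_map_solution_neg_eq (continuous_frameGenerator c₀ ε)
    (frameReflection_comp_frameGenerator_neg flipLast c₀ ε) hx hx0 (-s)
  simpa [eq_comm, frameReflection, flipLast_apply] using h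

theorem stmt7 (c₀ ε : ℝ) (hc₀ : 0 < c₀) (hε : ε = 1 ∨ ε = -1)
    (T e₁ e₂ : ℝ → Fin 3 → ℝ)
    (hT : ∀ s, HasDerivAt T (c₀ • e₁ s) s)
    (he₁ : ∀ s, HasDerivAt e₁ ((-(ε * c₀)) • T s + (s / 2) • e₂ s) s)
    (he₂ : ∀ s, HasDerivAt e₂ ((-(s / 2)) • e₁ s) s)
    (hT0 : T 0 = ![0, 0, 1])
    (he₁0 : e₁ 0 = ![1, 0, 0])
    (he₂0 : e₂ 0 = ![0, 1, 0]) :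
    ∀ s : ℝ,
      T (-s) = ![-(T s 0), -(T s 1), T s 2] ∧
      e₁ (-s) = ![e₁ s 0, e₁ s 1, -(e₁ s 2)] ∧
      e₂ (-s) = ![e₂ s 0, e₂ s 1, -(e₂ s 2)] :=
  stmt7_general c₀ ε T e₁ e₂ hT he₁ he₂ hT0 he₁0 he₂0
end
end
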